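/- arXiv:2312.02584 — 5 statements merged into one kernel-verified Lean document; each statement's English description precedes it below -/
import Mathlib

section
/- Let $(W,S)$ be a Coxeter system acting on a real vector space $\mathfrak{a}$ via a free and cofree Kac-Moody root datum, with simple roots $\alpha_i \in \mathfrak{a}^*$ and simple coroots $\alpha_i^\vee \in \mathfrak{a}$ satisfying $\langle \alpha_j, \alpha_i^\vee \rangle = a_{ij}$. Let $h \in C$ lie in the open fundamental chamber, i.e. $\langle \alpha_i, h \rangle > 0$ for all $i$. Then for every $w \in W$, one has $h - w(h) = \sum_{i} c_i \alpha_i^\vee$ with $c_i > 0$ for all $i$ in the support of $w$ and $c_i = 0$ for all $i$ not in the support of $w$. -/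
open scoped Pointwise

/-- The Coxeter matrix entry attached to a product `a_ij * a_ji` of entries of a
generalized Cartan matrix, via the standard table (`0` encodes `∞`). -/
def gcmCoxeterEntry (p : ℤ) : ℕ :=
  if p = 0 then 2 else if p = 1 then 3 else if p = 2 then 4 else if p = 3 then 6 else 0

/-- The Weyl group of a symmetrizable generalized Cartan matrix, together with its action
on the real Cartan subalgebra of a free and cofree Kac–Moody root datum. -/
structure KMWeyl (n : ℕ) (V : Type*) [AddCommGroup V] [Module ℝ V]
    (W : Type*) [Group W] (M : CoxeterMatrix (Fin n)) where
  /-- the generalized Cartan matrix -/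
  A : Matrix (Fin n) (Fin n) ℤ
  diag : ∀ i, A i i = 2
  offDiag : ∀ i j, i ≠ j → A i j ≤ 0
  zeroIff : ∀ i j, (A i j = 0 ↔ A j i = 0)
  symmetrizable : ∃ D B : Matrix (Fin n) (Fin n) ℝ, D.IsDiag ∧ B.IsSymm ∧
    A.map (Int.cast : ℤ → ℝ) = D * B
  coxMat : ∀ i j, i ≠ j → M i j = gcmCoxeterEntry (A i j * A j i)
  /-- the Coxeter system structure on the Weyl group -/
  cs : CoxeterSystem M W
  /-- the linear action of the Weyl group on the Cartan subalgebra -/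
  ρ : W →* (V →ₗ[ℝ] V)
  /-- the simple roots -/
  α : Fin n → (V →ₗ[ℝ] ℝ)
  /-- the simple coroots -/
  cor : Fin n → V
  pairing : ∀ i j, α j (cor i) = (A i j : ℝ)
  refl : ∀ i v, ρ (cs.simple i) v = v - α i v • cor i
  freeRoots : LinearIndependent ℝ α
  cofree : LinearIndependent ℝ cor

namespace KMWeyl

variable {n : ℕ} {V : Type*} [AddCommGroup V] [Module ℝ V]
  {W : Type*} [Group W] {M : CoxeterMatrix (Fin n)}

/-- The orbit of a point `h` under the Weyl group. -/
def orb (K : KMWeyl n V W M) (h : V) : Set V := Set.range fun w => K.ρ w h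

/-- The standard subgroup generated by the simple reflections indexed by `J`. -/
def std (K : KMWeyl n V W M) (J : Set (Fin n)) : Subgroup W :=
  Subgroup.closure (K.cs.simple '' J)

/-- The support of `w`: the indices occurring in every reduced word for `w`. -/
def supp (K : KMWeyl n V W M) (w : W) : Set (Fin n) :=
  {i | ∀ l : List (Fin n), K.cs.wordProd l = w → l.length = K.cs.length w → i ∈ l}

end KMWeyl

/-!
Write `w = s_{i_1} ⋯ s_{i_r}` as a reduced word. Telescoping gives
`h - w h = ∑_t ⟨α_{i_t}, h⟩ • s_{i_1} ⋯ s_{i_{t-1}} α_{i_t}^∨`, and each summand lies in the cone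
spanned by the simple coroots, because `u α_i^∨` does whenever `ℓ (u s_i) > ℓ u`. That fact is
proved by induction on `ℓ u`: split off from `u` a maximal alternating tail in `s_i, s_j` and
compute in rank two, where the coefficients stay nonnegative as long as the alternating
word is shorter than `m_ij`. At the first occurrence of a letter `i`, the summand contributes
`⟨α_i, h⟩ > 0` to the coefficient of `α_i^∨`; letters absent from some word for `w` never
contribute. The coroots being linearly independent, the coefficients do not depend on the word.
-/

/-- `(x, y) = dihedralCoeff P k` describes the alternating product `⋯ s_i s_j` of length `k`
applied to `α_i^∨`, when `P = a_ij a_ji` (see `KMWeyl.rho_alternatingWord_cor`). -/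
def dihedralCoeff (P : ℤ) : ℕ → ℤ × ℤ
  | 0 => (1, 0)
  | k + 1 =>
    if Even k then ((dihedralCoeff P k).1, (dihedralCoeff P k).1 - (dihedralCoeff P k).2)
    else (P * (dihedralCoeff P k).2 - (dihedralCoeff P k).1, (dihedralCoeff P k).2)

-- The ratio bounds are the invariant that carries the induction.
theorem dihedralCoeff_nonneg_of_four_le {P : ℤ} (hP : 4 ≤ P) (k : ℕ) :
    0 ≤ (dihedralCoeff P k).1 ∧ 0 ≤ (dihedralCoeff P k).2 ∧
      (Even k → 2 * (dihedralCoeff P k).2 ≤ (dihedralCoeff P k).1) ∧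
      (¬ Even k → 2 * (dihedralCoeff P k).1 ≤ P * (dihedralCoeff P k).2) := by
  induction k with
  | zero => simp [dihedralCoeff]
  | succ k ih =>
    obtain ⟨hx, hy, heven, hodd⟩ := ih
    by_cases hk : Even k
    · have hk' : ¬ Even (k + 1) := by simpa [Nat.even_add_one] using hk
      have := heven hk
      refine ⟨?_, ?_, ?_, ?_⟩ <;> simp [dihedralCoeff, hk, hk'] <;> nlinarith
    · have hk' : Even (k + 1) := by simpa [Nat.even_add_one] using hk
      have := hodd hk
      refine ⟨?_, ?_, ?_, ?_⟩ <;> simp [dihedralCoeff, hk, hk'] <;> nlinarith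

theorem dihedralCoeff_nonneg {P : ℤ} (hP : 0 ≤ P) {k : ℕ}
    (hk : gcmCoxeterEntry P = 0 ∨ k + 1 ≤ gcmCoxeterEntry P) :
    0 ≤ (dihedralCoeff P k).1 ∧ 0 ≤ (dihedralCoeff P k).2 := by
  by_cases h4 : 4 ≤ P
  · exact ⟨(dihedralCoeff_nonneg_of_four_le h4 k).1, (dihedralCoeff_nonneg_of_four_le h4 k).2.1⟩
  · interval_cases P <;> simp only [gcmCoxeterEntry] at hk <;> norm_num at hk <;>
      interval_cases k <;> decide

namespace CoxeterSystem

variable {B W : Type*} [Group W] {M : CoxeterMatrix B} (cs : CoxeterSystem M W)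

local prefix:100 "s" => cs.simple
local prefix:100 "π" => cs.wordProd
local prefix:100 "ℓ" => cs.length

theorem isReduced_of_length_le_length_mul {u : W} {ω : List B}
    (h : ℓ u + ω.length ≤ ℓ (u * π ω)) : cs.IsReduced ω :=
  le_antisymm (cs.length_wordProd_le ω) (by have := cs.length_mul_le u (π ω); omega)

theorem eq_zero_or_le_of_isReduced_alternatingWord {i i' : B} {m : ℕ}
    (h : cs.IsReduced (alternatingWord i i' m)) : M i i' = 0 ∨ m ≤ M i i' := by
  by_contra! hM
  exact cs.not_isReduced_alternatingWord i i' hM.1 hM.2 h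

theorem exists_eq_mul_alternatingWord_of_isRightDescent {w : W} {j : B}
    (hj : cs.IsRightDescent w j) (i : B) :
    ∃ (u : W) (k : ℕ), 0 < k ∧ w = u * π (alternatingWord i j k) ∧ ℓ w = ℓ u + k ∧
      ¬ cs.IsRightDescent u i ∧ ¬ cs.IsRightDescent u j := by
  induction hl : ℓ w generalizing w i j with
  | zero => rw [isRightDescent_iff] at hj; omega
  | succ N ih =>
    rw [isRightDescent_iff] at hj
    by_cases hi : cs.IsRightDescent (w * s j) i
    · obtain ⟨u, k, -, hu, hlen, hui, huj⟩ := ih hi j (by omega)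
      refine ⟨u, k + 1, k.succ_pos, ?_, by omega, huj, hui⟩
      rw [alternatingWord_succ, wordProd_concat, ← mul_assoc, ← hu, simple_mul_simple_cancel_right]
    · refine ⟨w * s j, 1, one_pos, ?_, by omega, hi, ?_⟩
      · simp [alternatingWord]
      · rw [not_isRightDescent_iff, simple_mul_simple_cancel_right]
        omega

end CoxeterSystem

namespace KMWeyl

variable {n : ℕ} {V : Type*} [AddCommGroup V] [Module ℝ V]
  {W : Type*} [Group W] {M : CoxeterMatrix (Fin n)} (K : KMWeyl n V W M)

local prefix:100 "π" => K.cs.wordProd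
local prefix:100 "ℓ" => K.cs.length

def corootCone : PointedCone ℝ V := PointedCone.hull ℝ (Set.range K.cor)

theorem exists_nonneg_of_mem_corootCone {v : V} (hv : v ∈ K.corootCone) :
    ∃ b : Fin n → ℝ, (∀ j, 0 ≤ b j) ∧ v = ∑ j, b j • K.cor j := by
  obtain ⟨c, rfl⟩ := (Submodule.mem_span_range_iff_exists_fun _).mp hv
  exact ⟨fun j => c j, fun j => (c j).2, rfl⟩

theorem rho_alternatingWord_cor (i j : Fin n) (k : ℕ) :
    K.ρ (π (CoxeterSystem.alternatingWord i j k)) (K.cor i)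
      = ((dihedralCoeff (K.A j i * K.A i j) k).1 : ℝ) • K.cor i
        + (-(K.A i j : ℝ) * (dihedralCoeff (K.A j i * K.A i j) k).2) • K.cor j := by
  induction k with
  | zero => simp [CoxeterSystem.alternatingWord, dihedralCoeff]
  | succ k ih =>
    rw [CoxeterSystem.alternatingWord_succ', K.cs.wordProd_cons, map_mul, Module.End.mul_apply, ih]
    by_cases hk : Even k <;>
    · simp only [hk, if_true, if_false, K.refl, map_add, map_smul, K.pairing, K.diag,
        dihedralCoeff, smul_eq_mul]
      push_cast
      module

theorem rho_cor_mem_corootCone {w : W} {i : Fin n} (hi : ¬ K.cs.IsRightDescent w i) :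
    K.ρ w (K.cor i) ∈ K.corootCone := by
  induction hl : ℓ w using Nat.strong_induction_on generalizing w i with
  | _ N ih =>
    rcases eq_or_ne w 1 with rfl | hw
    · rw [map_one, Module.End.one_apply]
      exact PointedCone.subset_hull (Set.mem_range_self i)
    obtain ⟨j, hj⟩ := K.cs.exists_rightDescent_of_ne_one hw
    have hij : i ≠ j := by rintro rfl; exact hi hj
    obtain ⟨u, k, hk, rfl, hlen, hui, huj⟩ :=
      K.cs.exists_eq_mul_alternatingWord_of_isRightDescent hj i
    have hred : K.cs.IsReduced (CoxeterSystem.alternatingWord j i (k + 1)) := by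
      apply K.cs.isReduced_of_length_le_length_mul (u := u)
      rw [CoxeterSystem.length_alternatingWord, CoxeterSystem.alternatingWord_succ,
        K.cs.wordProd_concat, ← mul_assoc]
      rw [CoxeterSystem.not_isRightDescent_iff] at hi
      omega
    have hP : 0 ≤ K.A j i * K.A i j :=
      mul_nonneg_of_nonpos_of_nonpos (K.offDiag j i hij.symm) (K.offDiag i j hij)
    obtain ⟨hx, hy⟩ := dihedralCoeff_nonneg hP (k := k)
      (K.coxMat j i hij.symm ▸ K.cs.eq_zero_or_le_of_isReduced_alternatingWord hred)
    rw [map_mul, Module.End.mul_apply, K.rho_alternatingWord_cor, map_add, map_smul, map_smul]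
    refine add_mem (PointedCone.smul_mem _ (by exact_mod_cast hx) (ih _ (by omega) hui rfl))
      (PointedCone.smul_mem _ ?_ (ih _ (by omega) huj rfl))
    exact mul_nonneg (neg_nonneg.mpr (by exact_mod_cast K.offDiag i j hij)) (by exact_mod_cast hy)

theorem exists_rho_wordProd_eq_add_sum (m : List (Fin n)) (v : V) :
    ∃ d : Fin n → ℝ, K.ρ (π m) v = v + ∑ j, d j • K.cor j ∧ ∀ j ∉ m, d j = 0 := by
  induction m with
  | nil => exact ⟨0, by simp, fun _ _ => rfl⟩
  | cons k m ih =>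
    obtain ⟨d, hd, hdm⟩ := ih
    refine ⟨d - Pi.single k (K.α k (K.ρ (π m) v)), ?_, fun j hj => ?_⟩
    · rw [K.cs.wordProd_cons, map_mul, Module.End.mul_apply, K.refl]
      nth_rw 1 [hd]
      simp only [Pi.sub_apply, sub_smul, Finset.sum_sub_distrib, Pi.single_apply, ite_smul,
        zero_smul, Finset.sum_ite_eq', Finset.mem_univ, if_true]
      abel
    · rw [List.mem_cons, not_or] at hj
      simp [hdm j hj.2, hj.1]

theorem exists_sub_rho_wordProd_eq_sum_of_isReduced (h : V) (hC : ∀ i, 0 < K.α i h)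
    {l : List (Fin n)} (hl : K.cs.IsReduced l) :
    ∃ c : Fin n → ℝ, h - K.ρ (π l) h = ∑ j, c j • K.cor j ∧ (∀ j, 0 ≤ c j) ∧
      ∀ j ∈ l, 0 < c j := by
  induction l using List.reverseRecOn with
  | nil => exact ⟨0, by simp, fun _ => le_rfl, by simp⟩
  | append_singleton l i ih =>
    have hl' : K.cs.IsReduced l := by simpa using hl.take l.length
    obtain ⟨c, hc, hc0, hcl⟩ := ih hl'
    have hi : ¬ K.cs.IsRightDescent (π l) i := by
      rw [CoxeterSystem.IsReduced] at hl hl'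
      rw [CoxeterSystem.not_isRightDescent_iff, ← K.cs.wordProd_singleton, ← K.cs.wordProd_append,
        hl, hl', List.length_append, List.length_singleton]
    obtain ⟨b, hb0, hb⟩ := K.exists_nonneg_of_mem_corootCone (K.rho_cor_mem_corootCone hi)
    have hbi : i ∉ l → b i = 1 := by
      intro hil
      obtain ⟨d, hd, hdl⟩ := K.exists_rho_wordProd_eq_add_sum l (K.cor i)
      have hsum : ∑ j, b j • K.cor j = ∑ j, (Pi.single i 1 + d : Fin n → ℝ) j • K.cor j := by
        simp [← hb, hd, add_smul, Finset.sum_add_distrib, Pi.single_apply]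
      simpa [hdl i hil] using Fintype.linearIndependent_iffₛ.mp K.cofree _ _ hsum i
    have hterm : ∀ j, 0 ≤ K.α i h * b j := fun j => mul_nonneg (hC i).le (hb0 j)
    refine ⟨c + K.α i h • b, ?_, fun j => add_nonneg (hc0 j) (hterm j), fun j hj => ?_⟩
    · rw [K.cs.wordProd_append, K.cs.wordProd_singleton, map_mul, Module.End.mul_apply, K.refl,
        map_sub, map_smul, hb]
      simp only [Pi.add_apply, Pi.smul_apply, smul_eq_mul, add_smul, mul_smul,
        Finset.sum_add_distrib, ← Finset.smul_sum, ← hc]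
      abel
    · by_cases hjl : j ∈ l
      · exact add_pos_of_pos_of_nonneg (hcl j hjl) (hterm j)
      · obtain rfl : j = i := by simpa [hjl] using hj
        simpa [hbi hjl] using add_pos_of_nonneg_of_pos (hc0 j) (hC j)

end KMWeyl

/-- For `h` in the open fundamental chamber and `w` in the Weyl group,
`h - w(h)` is a linear combination of simple coroots whose coefficients are positive exactly
on the support of `w` and zero off the support. -/
theorem stmt_1 {n : ℕ} {V : Type*} [AddCommGroup V] [Module ℝ V]
    {W : Type*} [Group W] {M : CoxeterMatrix (Fin n)} (K : KMWeyl n V W M)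
    (h : V) (hC : ∀ i, 0 < K.α i h) (w : W) :
    ∃ c : Fin n → ℝ, h - K.ρ w h = ∑ i, c i • K.cor i ∧
      (∀ i ∈ K.supp w, 0 < c i) ∧ (∀ i ∉ K.supp w, c i = 0) := by
  obtain ⟨l, hl, rfl⟩ := K.cs.exists_isReduced w
  obtain ⟨c, hc, -, hcl⟩ := K.exists_sub_rho_wordProd_eq_sum_of_isReduced h hC hl
  refine ⟨c, hc, fun i hi => hcl i (hi l rfl hl.symm), fun i hi => ?_⟩
  obtain ⟨l', hl', -, hil'⟩ : ∃ l', K.cs.wordProd l' = K.cs.wordProd l ∧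
      l'.length = K.cs.length (K.cs.wordProd l) ∧ i ∉ l' := by
    simpa [KMWeyl.supp] using hi
  obtain ⟨d, hd, hdl'⟩ := K.exists_rho_wordProd_eq_add_sum l' h
  have hneg : h - K.ρ (K.cs.wordProd l) h = ∑ j, (-d j) • K.cor j := by
    simp [← hl', hd, neg_smul, Finset.sum_neg_distrib]
  simpa [hdl' i hil'] using Fintype.linearIndependent_iffₛ.mp K.cofree _ _ (hc.symm.trans hneg) i
end

section
/- With notation as above: let $h$ be in the open fundamental chamber $C$ and suppose $h' \in \Xi_h = \operatorname{conv}(W\cdot h)$ is such that $v := h - h' = \sum_i c_i \alpha_i^\vee$ with $c_i > 0$ for all $i \in I$. Then the open line segment $(h, h')$ is contained in the relative interior of $\Xi_h$ inside the affine subspace $E_h = h + \operatorname{span}_{\mathbb{R}}(\alpha_1^\vee, \ldots, \alpha_n^\vee)$. -/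
open scoped Pointwise

/-! In the coordinates `t ↦ h - ∑ i, t i • α_i^∨` of `E_h`, the hull `Ξ_h` contains the simplex
with vertices `h` and `s_i h = h - ⟨α_i, h⟩ α_i^∨`, which is nondegenerate because `h ∈ C`. Every
small positive multiple of `c` lies in the interior of that simplex, and the open segment from such
a point to `c` (the coordinate of `h'`) stays in the interior of the convex set of coordinates of
`Ξ_h`; that segment covers the coordinates of `(h, h')`. Finally the coordinate map is a linear
embedding, so it carries interior points to relative interior points. -/

open Set Filter Topology

theorem Convex.sub_sum_smul_mem {𝕜 E ι : Type*} [Field 𝕜] [LinearOrder 𝕜]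
    [IsStrictOrderedRing 𝕜] [AddCommGroup E] [Module 𝕜 E] [Fintype ι]
    {s : Set E} (hs : Convex 𝕜 s) {p : E} (hp : p ∈ s) {a t : ι → 𝕜} {v : ι → E}
    (ha : ∀ i, 0 < a i) (hv : ∀ i, p - a i • v i ∈ s) (ht : ∀ i, 0 ≤ t i)
    (hsum : ∑ i, t i / a i ≤ 1) : p - ∑ i, t i • v i ∈ s := by
  have hcomb : ∑ o : Option ι, o.elim (1 - ∑ i, t i / a i) (fun i => t i / a i) •
      o.elim p (fun i => p - a i • v i) = p - ∑ i, t i • v i := by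
    simp only [Fintype.sum_option, Option.elim_none, Option.elim_some, smul_sub, smul_smul,
      Finset.sum_sub_distrib, ← Finset.sum_smul, div_mul_cancel₀ _ (ha _).ne']
    module
  rw [← hcomb]
  refine hs.sum_mem ?_ (by simp [Fintype.sum_option]) ?_
  · rintro (_ | i) -
    exacts [sub_nonneg.mpr hsum, div_nonneg (ht i) (ha i).le]
  · rintro (_ | i) -
    exacts [hp, hv i]

theorem Convex.smul_mem_interior_of_eventually {E : Type*} [AddCommGroup E] [Module ℝ E]
    [TopologicalSpace E] [IsTopologicalAddGroup E] [ContinuousSMul ℝ E]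
    {s : Set E} (hs : Convex ℝ s) {c : E} (hc : c ∈ s)
    (hnear : ∀ᶠ δ in 𝓝[>] (0 : ℝ), δ • c ∈ interior s) {r : ℝ} (hr : r ∈ Ioo 0 1) :
    r • c ∈ interior s := by
  obtain ⟨δ, hδc, hδr⟩ := (hnear.and (Ioo_mem_nhdsGT hr.1)).exists
  have hseg : r • c ∈ openSegment ℝ (δ • c) c := by
    have := image_openSegment ℝ (LinearMap.toSpanSingleton ℝ E c).toAffineMap δ 1
    simp only [LinearMap.coe_toAffineMap, LinearMap.toSpanSingleton_apply, one_smul] at this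
    rw [← this, openSegment_eq_Ioo (hδr.2.trans hr.2)]
    exact ⟨r, ⟨hδr.2, hr.2⟩, rfl⟩
  exact hs.openSegment_interior_self_subset_interior hδc hc hseg

theorem eventually_smul_mem_interior_of_simplex_subset {ι : Type*} [Fintype ι]
    {s : Set (ι → ℝ)} {a : ι → ℝ}
    (hsimplex : ∀ t, (∀ i, 0 ≤ t i) → ∑ i, t i / a i ≤ 1 → t ∈ s)
    {c : ι → ℝ} (hc : ∀ i, 0 < c i) :
    ∀ᶠ δ in 𝓝[>] (0 : ℝ), δ • c ∈ interior s := by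
  set U := {t : ι → ℝ | (∀ i, 0 < t i) ∧ ∑ i, t i / a i < 1}
  have hU : IsOpen U := by
    simp only [U, ofPred_and, ofPred_forall]
    exact (isOpen_iInter_of_finite fun i => isOpen_lt continuous_const (continuous_apply i))
      |>.inter (isOpen_lt (by fun_prop) continuous_const)
  have hUs : U ⊆ interior s :=
    interior_maximal (fun t ht => hsimplex t (fun i => (ht.1 i).le) ht.2.le) hU
  have hsmall : ∀ᶠ δ in 𝓝 (0 : ℝ), δ * ∑ i, c i / a i < 1 :=
    (continuous_id.mul continuous_const).continuousAt.eventually_lt continuousAt_const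
      (by simp)
  filter_upwards [self_mem_nhdsWithin, nhdsWithin_le_nhds hsmall] with δ hδ hδsmall
  refine hUs ⟨fun i => mul_pos hδ (hc i), ?_⟩
  simpa [Finset.mul_sum, mul_div_assoc] using hδsmall

theorem LinearMap.exists_ball_inter_range_subset_of_mem_interior {𝕜 E F : Type*}
    [NontriviallyNormedField 𝕜] [CompleteSpace 𝕜] [NormedAddCommGroup E] [NormedSpace 𝕜 E]
    [FiniteDimensional 𝕜 E] [NormedAddCommGroup F] [NormedSpace 𝕜 F]
    {φ : E →ₗ[𝕜] F} (hφ : Function.Injective φ) {p : F} {s : Set F} {t : E}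
    (ht : t ∈ interior {u | p - φ u ∈ s}) :
    ∃ ε > 0, ∀ y, y - p ∈ LinearMap.range φ → ‖y - (p - φ t)‖ < ε → y ∈ s := by
  have hemb := φ.isClosedEmbedding_of_injective (LinearMap.ker_eq_bot.mpr hφ)
  obtain ⟨ε, hε, hball⟩ := Metric.mem_nhdsWithin_iff.mp
    (hemb.isInducing.image_mem_nhdsWithin (mem_interior_iff_mem_nhds.mp ht))
  refine ⟨ε, hε, fun y hy hyt => ?_⟩
  rw [← neg_mem_iff, neg_sub] at hy
  have hball_y : p - y ∈ Metric.ball (φ t) ε := by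
    rwa [Metric.mem_ball, dist_eq_norm, ← norm_neg, show -(p - y - φ t) = y - (p - φ t) by abel]
  obtain ⟨u, hus, hu⟩ := hball ⟨hball_y, hy⟩
  simpa [hu] using hus

namespace KMWeyl

variable {n : ℕ} {V : Type*} [AddCommGroup V] [Module ℝ V]
  {W : Type*} [Group W] {M : CoxeterMatrix (Fin n)}

theorem sub_sum_smul_cor_mem_convexHull_orb (K : KMWeyl n V W M) {h : V}
    (hC : ∀ i, 0 < K.α i h) {t : Fin n → ℝ} (ht : ∀ i, 0 ≤ t i)
    (hsum : ∑ i, t i / K.α i h ≤ 1) :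
    h - ∑ i, t i • K.cor i ∈ convexHull ℝ (K.orb h) :=
  (convex_convexHull ℝ (K.orb h)).sub_sum_smul_mem (subset_convexHull ℝ _ ⟨1, by simp⟩) hC
    (fun i => subset_convexHull ℝ _ ⟨K.cs.simple i, K.refl i h⟩) ht hsum

end KMWeyl

theorem stmt_4_general {n : ℕ} {V : Type*} [NormedAddCommGroup V] [NormedSpace ℝ V]
    {W : Type*} [Group W] {M : CoxeterMatrix (Fin n)} (K : KMWeyl n V W M)
    (h : V) (hC : ∀ i, 0 < K.α i h)
    (h' : V) (hmem : h' ∈ convexHull ℝ (K.orb h))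
    (c : Fin n → ℝ) (hc : ∀ i, 0 < c i) (hv : h - h' = ∑ i, c i • K.cor i)
    (x : V) (hx : x ∈ openSegment ℝ h h') :
    ∃ ε > 0, ∀ y : V, y - h ∈ Submodule.span ℝ (Set.range K.cor) →
      ‖y - x‖ < ε → y ∈ convexHull ℝ (K.orb h) := by
  obtain ⟨ta, tb, hta, htb, htab, rfl⟩ := hx
  set φ := Fintype.linearCombination ℝ K.cor
  have hφ : ∀ t, φ t = ∑ i, t i • K.cor i := Fintype.linearCombination_apply ℝ K.cor
  set Q := {t : Fin n → ℝ | h - φ t ∈ convexHull ℝ (K.orb h)}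
  have hQ : Convex ℝ Q := (convex_convexHull ℝ (K.orb h)).affine_preimage
    (AffineMap.const ℝ (Fin n → ℝ) h - φ.toAffineMap)
  have hcQ : c ∈ Q := by simpa [Q, hφ, ← hv] using hmem
  have hsimplex : ∀ t, (∀ i, 0 ≤ t i) → ∑ i, t i / K.α i h ≤ 1 → t ∈ Q := fun t ht hsum => by
    simpa [Q, hφ] using K.sub_sum_smul_cor_mem_convexHull_orb hC ht hsum
  have hint : tb • c ∈ interior Q := hQ.smul_mem_interior_of_eventually hcQ
    (eventually_smul_mem_interior_of_simplex_subset hsimplex hc) ⟨htb, by linarith⟩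
  have hxφ : h - φ (tb • c) = ta • h + tb • h' := by
    rw [map_smul, hφ, ← hv, eq_sub_of_add_eq htab]
    module
  rw [← hxφ, ← Fintype.range_linearCombination]
  exact LinearMap.exists_ball_inter_range_subset_of_mem_interior
    (linearIndependent_iff_injective_fintypeLinearCombination.mp K.cofree) hint

/-- If `h` is in the open chamber and `h' ∈ Ξ_h` with `h - h'` a strictly positive
combination of all simple coroots, then the open segment `(h, h')` lies in the relative
interior of `Ξ_h` inside the affine subspace `E_h = h + span(coroots)`. -/
theorem stmt_4 {n : ℕ} {V : Type*} [NormedAddCommGroup V] [NormedSpace ℝ V]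
    [FiniteDimensional ℝ V]
    {W : Type*} [Group W] {M : CoxeterMatrix (Fin n)} (K : KMWeyl n V W M)
    (h : V) (hC : ∀ i, 0 < K.α i h)
    (h' : V) (hmem : h' ∈ convexHull ℝ (K.orb h))
    (c : Fin n → ℝ) (hc : ∀ i, 0 < c i) (hv : h - h' = ∑ i, c i • K.cor i)
    (x : V) (hx : x ∈ openSegment ℝ h h') :
    ∃ ε > 0, ∀ y : V, y - h ∈ Submodule.span ℝ (Set.range K.cor) →
      ‖y - x‖ < ε → y ∈ convexHull ℝ (K.orb h) :=
  stmt_4_general K h hC h' hmem c hc hv x hx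
end

section
/- In the setting of the closedness proof: let $h \in C$, set $\omega = \sum_{i\in I}\omega_i$ and $c = \min_i \langle \alpha_i, h\rangle > 0$. For every $w \in W$ and $i \in I$ with $\ell(w) < \ell(s_i w)$, we have $\langle \omega, s_i w(h) \rangle \leq \langle \omega, w(h) \rangle - c$. Consequently, every $w \in W$ satisfies $\langle \omega, w(h) \rangle \leq \langle \omega, h \rangle - \ell(w)\, c$. -/
open scoped Pointwise

/-! ### Auxiliary development for the closedness estimate -/

section Aux

/-- Coefficients of `α_i ∘ ρ(w_k)` in the basis `(α_i, α_j)`, where `w_k` is the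
alternating product of `k` simple reflections starting with `s_j`;
here `a = -A i j` and `b = -A j i`. -/
def coeffSeq (a b : ℤ) : ℕ → ℤ × ℤ
  | 0 => (1, 0)
  | (t+1) =>
      if t % 2 = 0 then ((coeffSeq a b t).1, b * (coeffSeq a b t).1 - (coeffSeq a b t).2)
      else (a * (coeffSeq a b t).2 - (coeffSeq a b t).1, (coeffSeq a b t).2)

lemma coeffSeq_even (a b : ℤ) (t : ℕ) (ht : t % 2 = 0) :
    coeffSeq a b (t+1) = ((coeffSeq a b t).1, b * (coeffSeq a b t).1 - (coeffSeq a b t).2) := by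
  simp [coeffSeq, ht]

lemma coeffSeq_odd (a b : ℤ) (t : ℕ) (ht : ¬ t % 2 = 0) :
    coeffSeq a b (t+1) = (a * (coeffSeq a b t).2 - (coeffSeq a b t).1, (coeffSeq a b t).2) := by
  simp [coeffSeq, ht]

lemma coeffSeq_invariant (a b : ℤ) (ha : 0 ≤ a) (hb : 0 ≤ b) (hab : 4 ≤ a * b) (t : ℕ) :
    1 ≤ (coeffSeq a b t).1 ∧ 0 ≤ (coeffSeq a b t).2 ∧
      (t % 2 = 0 → 2 * (coeffSeq a b t).2 ≤ b * (coeffSeq a b t).1) ∧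
      (¬ t % 2 = 0 → 2 * (coeffSeq a b t).1 ≤ a * (coeffSeq a b t).2) := by
  induction t with
  | zero =>
    refine ⟨by norm_num [coeffSeq], by norm_num [coeffSeq], fun _ => ?_, fun h => absurd rfl h⟩
    norm_num [coeffSeq]; linarith
  | succ t ih =>
    obtain ⟨h1, h2, h3, h4⟩ := ih
    by_cases ht : t % 2 = 0
    · have h3' := h3 ht
      have hodd : ¬ (t + 1) % 2 = 0 := by omega
      rw [coeffSeq_even a b t ht]; dsimp only
      exact ⟨h1, by nlinarith, fun h => absurd h hodd, fun _ => by nlinarith⟩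
    · have h4' := h4 ht
      have heven : (t + 1) % 2 = 0 := by omega
      rw [coeffSeq_odd a b t ht]; dsimp only
      exact ⟨by nlinarith, h2, fun _ => by nlinarith, fun h => absurd heven h⟩

lemma coeffSeq_nonneg (a b : ℤ) (ha : 0 ≤ a) (hb : 0 ≤ b) (k : ℕ)
    (hk : gcmCoxeterEntry (a * b) = 0 ∨ k < gcmCoxeterEntry (a * b)) :
    0 ≤ (coeffSeq a b k).1 ∧ 0 ≤ (coeffSeq a b k).2 ∧
      1 ≤ (coeffSeq a b k).1 + (coeffSeq a b k).2 := by
  by_cases h4 : 4 ≤ a * b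
  · obtain ⟨h1, h2, -, -⟩ := coeffSeq_invariant a b ha hb h4 k
    exact ⟨by omega, h2, by omega⟩
  · have hab : a * b = 0 ∨ a * b = 1 ∨ a * b = 2 ∨ a * b = 3 := by
      have : 0 ≤ a * b := mul_nonneg ha hb
      omega
    rcases hab with h | h | h | h
    · rw [h] at hk
      norm_num [gcmCoxeterEntry] at hk
      have hk' : k = 0 ∨ k = 1 := by omega
      rcases hk' with rfl | rfl
      · exact ⟨by norm_num [coeffSeq], by norm_num [coeffSeq], by norm_num [coeffSeq]⟩
      · refine ⟨by norm_num [coeffSeq], ?_, ?_⟩ <;> (norm_num [coeffSeq]; linarith)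
    all_goals {
      rw [h] at hk
      have ha1 : 1 ≤ a := by nlinarith
      have hb1 : 1 ≤ b := by nlinarith
      have ha3 : a ≤ 3 := by nlinarith
      have hb3 : b ≤ 3 := by nlinarith
      norm_num [gcmCoxeterEntry] at hk
      interval_cases a <;> interval_cases b <;> (try omega) <;>
        (interval_cases k <;> norm_num [coeffSeq])
    }

open CoxeterSystem List

variable {B : Type*}

/-- The word `[i, j, i, j, ...]` of length `k`, starting with `i`. -/
def mwWord (i j : B) (k : ℕ) : List B :=
  (List.range k).map (fun t => if t % 2 = 0 then i else j)

@[simp] lemma mwWord_zero (i j : B) : mwWord i j 0 = [] := rfl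

@[simp] lemma mwWord_one (i j : B) : mwWord i j 1 = [i] := rfl

lemma mwWord_succ (i j : B) (k : ℕ) :
    mwWord i j (k+1) = mwWord i j k ++ [if k % 2 = 0 then i else j] := by
  simp [mwWord, List.range_succ]

lemma mwWord_cons (i j : B) (k : ℕ) :
    mwWord i j (k+1) = i :: mwWord j i k := by
  simp only [mwWord, List.range_succ_eq_map, List.map_cons, List.map_map]
  congr 1
  apply List.map_congr_left
  intro t _
  simp only [Function.comp_apply, Nat.succ_eq_add_one]
  rcases Nat.even_or_odd t with h | h
  · have h1 : t % 2 = 0 := Nat.even_iff.mp h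
    have h2 : ¬ (t + 1) % 2 = 0 := by omega
    simp [h1, h2]
  · have h1 : ¬ t % 2 = 0 := by rw [Nat.odd_iff] at h; omega
    have h2 : (t + 1) % 2 = 0 := by rw [Nat.odd_iff] at h; omega
    simp [h1, h2]

lemma mwWord_eq_alternatingWord (i j : B) (k : ℕ) :
    mwWord i j k = alternatingWord (if k % 2 = 0 then i else j) (if k % 2 = 0 then j else i) k := by
  induction k generalizing i j with
  | zero => simp [alternatingWord]
  | succ k ih =>
    rw [mwWord_succ, ih i j]
    by_cases hk : k % 2 = 0
    · have hk1 : ¬ (k + 1) % 2 = 0 := by omega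
      rw [if_pos hk, if_pos hk, if_neg hk1, if_neg hk1, alternatingWord_succ]
      simp [List.concat_eq_append]
    · have hk1 : (k + 1) % 2 = 0 := by omega
      rw [if_neg hk, if_neg hk, if_pos hk1, if_pos hk1, alternatingWord_succ]
      simp [List.concat_eq_append]

@[simp] lemma mwWord_length (i j : B) (k : ℕ) : (mwWord i j k).length = k := by
  simp [mwWord]

variable {W : Type*} [Group W] {M : CoxeterMatrix B} (cs : CoxeterSystem M W)

/-- If the alternating word of length `k` is reduced and `M i j ≠ 0`, then `k ≤ M i j`. -/
lemma mwWord_reduced_le (i j : B) (k : ℕ) (hM : M i j ≠ 0)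
    (hred : cs.length (cs.wordProd (mwWord i j k)) = k) : k ≤ M i j := by
  by_contra hlt
  push_neg at hlt
  have h1 : cs.IsReduced (mwWord i j k) := by
    unfold CoxeterSystem.IsReduced
    rw [mwWord_length]; exact hred
  rw [mwWord_eq_alternatingWord] at h1
  by_cases hk : k % 2 = 0
  · rw [if_pos hk, if_pos hk] at h1
    exact cs.not_isReduced_alternatingWord i j hM hlt h1
  · rw [if_neg hk, if_neg hk] at h1
    exact cs.not_isReduced_alternatingWord j i (by rwa [← M.symmetric i j])
      (by rwa [← M.symmetric i j]) h1

/-- Braid relation for `mwWord`s of full length `M i j`. -/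
lemma mwWord_braid (i j : B) :
    cs.wordProd (mwWord i j (M i j)) = cs.wordProd (mwWord j i (M i j)) := by
  have h := cs.prod_alternatingWord_eq_prod_alternatingWord_sub i j (M i j) (by omega)
  rw [(by omega : M i j * 2 - M i j = M i j)] at h
  rw [mwWord_eq_alternatingWord i j, mwWord_eq_alternatingWord j i]
  by_cases hk : (M i j) % 2 = 0
  · rw [if_pos hk, if_pos hk]; exact h
  · rw [if_neg hk, if_neg hk]; exact h.symm

end Aux

namespace KMWeyl

open CoxeterSystem

variable {n : ℕ} {V : Type*} [AddCommGroup V] [Module ℝ V]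
  {W : Type*} [Group W] {M : CoxeterMatrix (Fin n)} (K : KMWeyl n V W M)

lemma rho_mul_apply (x y : W) (v : V) : K.ρ (x * y) v = K.ρ x (K.ρ y v) := by
  rw [map_mul]; rfl

lemma alpha_refl (l i : Fin n) (v : V) :
    K.α l (K.ρ (K.cs.simple i) v) = K.α l v - (K.A i l : ℝ) * K.α i v := by
  rw [K.refl, map_sub, map_smul, K.pairing i l, smul_eq_mul]
  ring

/-- Helper: a two-term sum over `Fin n`. -/
lemma sum_pair {i j : Fin n} (hij : i ≠ j) (P Q : ℝ) (f : Fin n → ℝ) :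
    ∑ l, (if l = i then P else if l = j then Q else 0) * f l = P * f i + Q * f j := by
  have : ∀ l : Fin n, (if l = i then P else if l = j then Q else 0) * f l
      = (if l = i then P * f l else 0) + (if l = j then Q * f l else 0) := by
    intro l
    by_cases h1 : l = i
    · subst h1; rw [if_pos rfl, if_pos rfl, if_neg hij]; ring
    · by_cases h2 : l = j
      · subst h2; rw [if_neg h1, if_pos rfl, if_neg h1, if_pos rfl]; ring
      · rw [if_neg h1, if_neg h2, if_neg h1, if_neg h2]; ring
  rw [Finset.sum_congr rfl fun l _ => this l, Finset.sum_add_distrib,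
    Finset.sum_ite_eq' Finset.univ i (fun l => P * f l),
    Finset.sum_ite_eq' Finset.univ j (fun l => Q * f l)]
  simp

/-- The coefficients of `α_i ∘ ρ(w_k)` for the alternating word `w_k` starting with `s_j`. -/
lemma coeff_mw (i j : Fin n) (hij : i ≠ j) (k : ℕ) (v : V) :
    K.α i (K.ρ (K.cs.wordProd (mwWord j i k)) v) =
      ((coeffSeq (-(K.A i j)) (-(K.A j i)) k).1 : ℝ) * K.α i v +
      ((coeffSeq (-(K.A i j)) (-(K.A j i)) k).2 : ℝ) * K.α j v := by
  induction k generalizing v with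
  | zero => simp [coeffSeq]
  | succ k ih =>
    rw [mwWord_succ, K.cs.wordProd_append, K.cs.wordProd_singleton, K.rho_mul_apply]
    by_cases hk : k % 2 = 0
    · rw [if_pos hk, ih (K.ρ (K.cs.simple j) v), coeffSeq_even _ _ k hk]
      dsimp only
      rw [K.alpha_refl i j v, K.alpha_refl j j v, K.diag j]
      push_cast
      ring
    · rw [if_neg hk, ih (K.ρ (K.cs.simple i) v), coeffSeq_odd _ _ k hk]
      dsimp only
      rw [K.alpha_refl i i v, K.alpha_refl j i v, K.diag i]
      push_cast
      ring

/-- Decomposition `w = u · v` where `u` is an alternating `{i,j}`-product and `v` has no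
left descent at `i` nor at `j`, with lengths adding. -/
lemma decomp (i j : Fin n) : ∀ (N : ℕ) (w : W), K.cs.length w ≤ N →
    ∃ (k : ℕ) (v : W), K.cs.length w = k + K.cs.length v ∧
      ¬ K.cs.IsLeftDescent v i ∧ ¬ K.cs.IsLeftDescent v j ∧
      (w = K.cs.wordProd (mwWord i j k) * v ∨ w = K.cs.wordProd (mwWord j i k) * v) := by
  intro N
  induction N with
  | zero =>
    intro w hw
    have hw1 : w = 1 := K.cs.length_eq_zero_iff.mp (Nat.le_zero.mp hw)
    subst hw1
    exact ⟨0, 1, by simp, K.cs.not_isLeftDescent_one i, K.cs.not_isLeftDescent_one j,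
      Or.inl (by simp)⟩
  | succ N ih =>
    intro w hw
    by_cases hdi : K.cs.IsLeftDescent w i
    · have hlen : K.cs.length (K.cs.simple i * w) + 1 = K.cs.length w :=
        K.cs.isLeftDescent_iff.mp hdi
      obtain ⟨k, v, hkv, hvi, hvj, hor⟩ := ih (K.cs.simple i * w) (by omega)
      have hww' : w = K.cs.simple i * (K.cs.simple i * w) :=
        (K.cs.simple_mul_simple_cancel_left i).symm
      rcases hor with h | h
      · rcases k with _ | k'
        · simp only [mwWord_zero, K.cs.wordProd_nil, one_mul] at h
          refine ⟨1, v, ?_, hvi, hvj, Or.inl ?_⟩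
          · have h2 : K.cs.length (K.cs.simple i * v) = K.cs.length v + 1 :=
              K.cs.not_isLeftDescent_iff.mp hvi
            rw [hww', h, h2]
            omega
          · rw [hww', h, mwWord_one, K.cs.wordProd_singleton]
        · exfalso
          have h2 : w = K.cs.wordProd (mwWord j i k') * v := by
            rw [hww', h, mwWord_cons, K.cs.wordProd_cons, mul_assoc,
              K.cs.simple_mul_simple_cancel_left]
          have h3 : K.cs.length w ≤ K.cs.length (K.cs.wordProd (mwWord j i k'))
              + K.cs.length v := h2 ▸ K.cs.length_mul_le _ _
          have h4 : K.cs.length (K.cs.wordProd (mwWord j i k')) ≤ k' := by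
            simpa using K.cs.length_wordProd_le (mwWord j i k')
          omega
      · refine ⟨k + 1, v, by omega, hvi, hvj, Or.inl ?_⟩
        rw [hww', h, mwWord_cons, K.cs.wordProd_cons, mul_assoc]
    · by_cases hdj : K.cs.IsLeftDescent w j
      · have hlen : K.cs.length (K.cs.simple j * w) + 1 = K.cs.length w :=
          K.cs.isLeftDescent_iff.mp hdj
        obtain ⟨k, v, hkv, hvi, hvj, hor⟩ := ih (K.cs.simple j * w) (by omega)
        have hww' : w = K.cs.simple j * (K.cs.simple j * w) :=
          (K.cs.simple_mul_simple_cancel_left j).symm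
        rcases hor with h | h
        · refine ⟨k + 1, v, by omega, hvi, hvj, Or.inr ?_⟩
          rw [hww', h, mwWord_cons, K.cs.wordProd_cons, mul_assoc]
        · rcases k with _ | k'
          · simp only [mwWord_zero, K.cs.wordProd_nil, one_mul] at h
            refine ⟨1, v, ?_, hvi, hvj, Or.inr ?_⟩
            · have h2 : K.cs.length (K.cs.simple j * v) = K.cs.length v + 1 :=
                K.cs.not_isLeftDescent_iff.mp hvj
              rw [hww', h, h2]
              omega
            · rw [hww', h, mwWord_one, K.cs.wordProd_singleton]
          · exfalso
            have h2 : w = K.cs.wordProd (mwWord i j k') * v := by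
              rw [hww', h, mwWord_cons, K.cs.wordProd_cons, mul_assoc,
                K.cs.simple_mul_simple_cancel_left]
            have h3 : K.cs.length w ≤ K.cs.length (K.cs.wordProd (mwWord i j k'))
                + K.cs.length v := h2 ▸ K.cs.length_mul_le _ _
            have h4 : K.cs.length (K.cs.wordProd (mwWord i j k')) ≤ k' := by
              simpa using K.cs.length_wordProd_le (mwWord i j k')
            omega
      · exact ⟨0, w, by simp, hdi, hdj, Or.inl (by simp)⟩

/-- The key positivity result: if `ℓ(s_i w) > ℓ(w)` then `α_i ∘ ρ(w)` is a nonnegative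
nonzero integral combination of the simple roots. -/
lemma main : ∀ (N : ℕ) (w : W), K.cs.length w ≤ N → ∀ i : Fin n,
    K.cs.length w < K.cs.length (K.cs.simple i * w) →
    ∃ κ : Fin n → ℕ, (∃ l, κ l ≠ 0) ∧
      ∀ v : V, K.α i (K.ρ w v) = ∑ l, (κ l : ℝ) * K.α l v := by
  intro N
  induction N with
  | zero =>
    intro w hw i _
    have hw1 : w = 1 := K.cs.length_eq_zero_iff.mp (Nat.le_zero.mp hw)
    subst hw1
    refine ⟨fun l => if l = i then 1 else 0, ⟨i, by simp⟩, fun v => ?_⟩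
    rw [map_one, Module.End.one_apply, eq_comm]
    rw [Finset.sum_congr rfl (fun l _ => by
      rw [show (((if l = i then 1 else 0 : ℕ)) : ℝ) = (if l = i then (1:ℝ) else 0) by
        split_ifs <;> simp])]
    simp [ite_mul]
  | succ N ih =>
    intro w hw i hi
    by_cases hone : w = 1
    · subst hone
      refine ⟨fun l => if l = i then 1 else 0, ⟨i, by simp⟩, fun v => ?_⟩
      rw [map_one, Module.End.one_apply, eq_comm]
      rw [Finset.sum_congr rfl (fun l _ => by
        rw [show (((if l = i then 1 else 0 : ℕ)) : ℝ) = (if l = i then (1:ℝ) else 0) by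
          split_ifs <;> simp])]
      simp [ite_mul]
    · have hdi : ¬ K.cs.IsLeftDescent w i := by
        unfold CoxeterSystem.IsLeftDescent
        omega
      obtain ⟨j, hdj⟩ := K.cs.exists_leftDescent_of_ne_one hone
      have hij : i ≠ j := by rintro rfl; exact hdi hdj
      obtain ⟨k, v, hkv, hvi, hvj, hor⟩ := K.decomp i j (N+1) w hw
      have hk1 : 1 ≤ k := by
        rcases Nat.eq_zero_or_pos k with rfl | h
        · exfalso
          rcases hor with h | h <;>
            · simp only [mwWord_zero, K.cs.wordProd_nil, one_mul] at h
              exact hvj (h ▸ hdj)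
        · exact h
      rcases hor with h | h
      · -- impossible: `w` starts with `i`
        exfalso
        obtain ⟨k', rfl⟩ : ∃ k', k = k' + 1 := ⟨k - 1, by omega⟩
        have h2 : K.cs.simple i * w = K.cs.wordProd (mwWord j i k') * v := by
          rw [h, mwWord_cons, K.cs.wordProd_cons, mul_assoc,
            K.cs.simple_mul_simple_cancel_left]
        have h3 : K.cs.length (K.cs.simple i * w) ≤
            K.cs.length (K.cs.wordProd (mwWord j i k')) + K.cs.length v :=
          h2 ▸ K.cs.length_mul_le _ _
        have h4 : K.cs.length (K.cs.wordProd (mwWord j i k')) ≤ k' := by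
          simpa using K.cs.length_wordProd_le (mwWord j i k')
        omega
      · set u := K.cs.wordProd (mwWord j i k) with hu
        set p := (coeffSeq (-(K.A i j)) (-(K.A j i)) k).1 with hp
        set q := (coeffSeq (-(K.A i j)) (-(K.A j i)) k).2 with hq
        have ha0 : (0:ℤ) ≤ -(K.A i j) := neg_nonneg.mpr (K.offDiag i j hij)
        have hb0 : (0:ℤ) ≤ -(K.A j i) := neg_nonneg.mpr (K.offDiag j i hij.symm)
        have hlu_le : K.cs.length u ≤ k := by
          simpa using K.cs.length_wordProd_le (mwWord j i k)
        have hlw_le : K.cs.length w ≤ K.cs.length u + K.cs.length v :=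
          h ▸ K.cs.length_mul_le u v
        have hlu : K.cs.length u = k := by omega
        have hdiu : K.cs.length u < K.cs.length (K.cs.simple i * u) := by
          by_contra hcon
          push_neg at hcon
          have hne := K.cs.length_simple_mul_ne u i
          have h5 : K.cs.length (K.cs.simple i * w) ≤
              K.cs.length (K.cs.simple i * u) + K.cs.length v := by
            rw [h, ← mul_assoc]
            exact K.cs.length_mul_le _ v
          omega
        obtain ⟨p, q, hpqdef⟩ : ∃ p q : ℤ, coeffSeq (-(K.A i j)) (-(K.A j i)) k = (p, q) :=
          ⟨_, _, rfl⟩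
        have hcoeff : ∀ x : V, K.α i (K.ρ u x) = (p:ℝ) * K.α i x + (q:ℝ) * K.α j x := by
          intro x
          have h6 := K.coeff_mw i j hij k x
          rw [hpqdef] at h6
          exact h6
        by_cases hv1 : v = 1
        · -- dihedral case
          subst hv1
          rw [mul_one] at h
          simp only [K.cs.length_one] at hkv
          have hbound : gcmCoxeterEntry ((-(K.A i j)) * (-(K.A j i))) = 0 ∨
              k < gcmCoxeterEntry ((-(K.A i j)) * (-(K.A j i))) := by
            have hMij : M i j = gcmCoxeterEntry (K.A i j * K.A j i) := K.coxMat i j hij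
            have hprod : (-(K.A i j)) * (-(K.A j i)) = K.A i j * K.A j i := by ring
            rw [hprod, ← hMij]
            by_cases hM0 : M i j = 0
            · exact Or.inl hM0
            · right
              have hsym : M.M j i = M.M i j := M.symmetric j i
              have hk_le : k ≤ M i j := by
                rw [← hsym]
                refine mwWord_reduced_le K.cs j i k (by rw [hsym]; exact hM0) ?_
                rw [← hu, hlu]
              rcases lt_or_eq_of_le hk_le with hlt | heq
              · exact hlt
              · exfalso
                have hbr := mwWord_braid K.cs j i
                rw [hsym, ← heq] at hbr
                have hw2 : w = K.cs.wordProd (mwWord i j k) := h.trans hbr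
                obtain ⟨k', rfl⟩ : ∃ k', k = k' + 1 := ⟨k - 1, by omega⟩
                have h2 : K.cs.simple i * w = K.cs.wordProd (mwWord j i k') := by
                  rw [hw2, mwWord_cons, K.cs.wordProd_cons,
                    K.cs.simple_mul_simple_cancel_left]
                have h3 : K.cs.length (K.cs.simple i * w) ≤ k' := by
                  rw [h2]
                  simpa using K.cs.length_wordProd_le (mwWord j i k')
                omega
          obtain ⟨hp0, hq0, hpq⟩ := coeffSeq_nonneg _ _ ha0 hb0 k hbound
          rw [hpqdef] at hp0 hq0 hpq
          dsimp only at hp0 hq0 hpq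
          refine ⟨fun l => if l = i then p.toNat else if l = j then q.toNat else 0, ?_, fun x => ?_⟩
          · rcases (by omega : 1 ≤ p ∨ 1 ≤ q) with h1 | h1
            · refine ⟨i, ?_⟩
              dsimp only
              rw [if_pos rfl]
              omega
            · refine ⟨j, ?_⟩
              dsimp only
              rw [if_neg hij.symm, if_pos rfl]
              omega
          · rw [h, hcoeff x, eq_comm]
            rw [Finset.sum_congr rfl (fun l _ => by
              rw [show (((if l = i then p.toNat else if l = j then q.toNat else 0 : ℕ)) : ℝ)
                  = (if l = i then (p:ℝ) else if l = j then (q:ℝ) else 0) by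
                split_ifs with h1 h2
                · exact_mod_cast congrArg (Int.cast : ℤ → ℝ) (Int.toNat_of_nonneg hp0)
                · exact_mod_cast congrArg (Int.cast : ℤ → ℝ) (Int.toNat_of_nonneg hq0)
                · simp])]
            rw [sum_pair hij]
        · -- composite case
          have hlv1 : 1 ≤ K.cs.length v := by
            rcases Nat.eq_zero_or_pos (K.cs.length v) with h0 | h0
            · exact absurd (K.cs.length_eq_zero_iff.mp h0) hv1
            · exact h0
          obtain ⟨κu, ⟨l0, hl0⟩, hκu⟩ := ih u (by omega) i hdiu
          have hdvi : K.cs.length v < K.cs.length (K.cs.simple i * v) := by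
            have := K.cs.not_isLeftDescent_iff.mp hvi; omega
          have hdvj : K.cs.length v < K.cs.length (K.cs.simple j * v) := by
            have := K.cs.not_isLeftDescent_iff.mp hvj; omega
          obtain ⟨κ1, ⟨m1, hm1⟩, hκ1⟩ := ih v (by omega) i hdvi
          obtain ⟨κ2, ⟨m2, hm2⟩, hκ2⟩ := ih v (by omega) j hdvj
          have hsupp : ∀ l, (κu l : ℝ)
              = (if l = i then (p:ℝ) else if l = j then (q:ℝ) else 0) := by
            have hzero : (∑ l, ((κu l : ℝ)
                - (if l = i then (p:ℝ) else if l = j then (q:ℝ) else 0)) • K.α l) = 0 := by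
              apply LinearMap.ext
              intro x
              simp only [LinearMap.sum_apply, LinearMap.smul_apply, smul_eq_mul,
                LinearMap.zero_apply]
              rw [Finset.sum_congr rfl fun l _ => sub_mul _ _ ((K.α l) x),
                Finset.sum_sub_distrib, sum_pair hij, ← hκu x, ← hcoeff x, sub_self]
            intro l
            have h7 := Fintype.linearIndependent_iff.mp K.freeRoots _ hzero l
            linarith [h7]
          have hκui : ((κu i : ℕ) : ℝ) = (p:ℝ) := by
            have h8 := hsupp i
            rwa [if_pos rfl] at h8
          have hκuj : ((κu j : ℕ) : ℝ) = (q:ℝ) := by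
            have h8 := hsupp j
            rwa [if_neg hij.symm, if_pos rfl] at h8
          refine ⟨fun l => κu i * κ1 l + κu j * κ2 l, ?_, fun x => ?_⟩
          · have hsuppl0 : l0 = i ∨ l0 = j := by
              by_contra hcon
              push_neg at hcon
              have h9 := hsupp l0
              rw [if_neg hcon.1, if_neg hcon.2] at h9
              exact hl0 (by exact_mod_cast h9)
            rcases hsuppl0 with rfl | rfl
            · refine ⟨m1, ?_⟩
              have h10 : 0 < κu l0 * κ1 m1 := Nat.mul_pos (Nat.pos_of_ne_zero hl0)
                (Nat.pos_of_ne_zero hm1)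
              dsimp only
              exact Nat.pos_iff_ne_zero.mp (lt_of_lt_of_le h10 (Nat.le_add_right _ _))
            · refine ⟨m2, ?_⟩
              have h10 : 0 < κu l0 * κ2 m2 := Nat.mul_pos (Nat.pos_of_ne_zero hl0)
                (Nat.pos_of_ne_zero hm2)
              dsimp only
              exact Nat.pos_iff_ne_zero.mp (lt_of_lt_of_le h10 (Nat.le_add_left _ _))

          · rw [h, K.rho_mul_apply, hcoeff (K.ρ v x), hκ1 x, hκ2 x,
              Finset.mul_sum, Finset.mul_sum, ← Finset.sum_add_distrib]
            refine Finset.sum_congr rfl fun l _ => ?_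
            push_cast
            rw [hκui, hκuj]
            ring

end KMWeyl

/-- With `ω = ∑ ω_i` and `c` a lower bound for the `⟨α_i, h⟩` (e.g. their minimum, which is
positive since `h ∈ C`): if `ℓ(w) < ℓ(s_i w)` then `⟨ω, s_i w(h)⟩ ≤ ⟨ω, w(h)⟩ - c`;
consequently `⟨ω, w(h)⟩ ≤ ⟨ω, h⟩ - ℓ(w)·c` for every `w`. -/
theorem stmt_6 {n : ℕ} {V : Type*} [AddCommGroup V] [Module ℝ V]
    {W : Type*} [Group W] {M : CoxeterMatrix (Fin n)} (K : KMWeyl n V W M)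
    (h : V) (hC : ∀ i, 0 < K.α i h)
    (ω : Fin n → (V →ₗ[ℝ] ℝ)) (hω : ∀ i j, ω i (K.cor j) = if i = j then 1 else 0)
    (c : ℝ) (hc : ∀ i, c ≤ K.α i h) :
    (∀ (w : W) (i : Fin n), K.cs.length w < K.cs.length (K.cs.simple i * w) →
      (∑ j, ω j) (K.ρ (K.cs.simple i * w) h) ≤ (∑ j, ω j) (K.ρ w h) - c) ∧
    (∀ w : W, (∑ j, ω j) (K.ρ w h) ≤ (∑ j, ω j) h - (K.cs.length w : ℝ) * c) := by
  classical
  have hcor : ∀ i : Fin n, (∑ j, ω j) (K.cor i) = 1 := by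
    intro i
    rw [LinearMap.sum_apply, Finset.sum_congr rfl fun l _ => hω l i]
    simp
  have part1 : ∀ (w : W) (i : Fin n), K.cs.length w < K.cs.length (K.cs.simple i * w) →
      (∑ j, ω j) (K.ρ (K.cs.simple i * w) h) ≤ (∑ j, ω j) (K.ρ w h) - c := by
    intro w i hlt
    have hval : c ≤ K.α i (K.ρ w h) := by
      obtain ⟨κ, ⟨l0, hl0⟩, hκ⟩ := K.main (K.cs.length w) w le_rfl i hlt
      rw [hκ h]
      have h1 : c ≤ (κ l0 : ℝ) * K.α l0 h := by
        have h2 : (1:ℝ) ≤ (κ l0 : ℝ) := by exact_mod_cast Nat.one_le_iff_ne_zero.mpr hl0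
        nlinarith [hc l0, hC l0]
      have h2 : (κ l0 : ℝ) * K.α l0 h ≤ ∑ l, (κ l : ℝ) * K.α l h :=
        Finset.single_le_sum (f := fun l => (κ l : ℝ) * K.α l h)
          (fun l _ => mul_nonneg (Nat.cast_nonneg _) (le_of_lt (hC l)))
          (Finset.mem_univ l0)
      linarith
    have hrw : K.ρ (K.cs.simple i * w) h = K.ρ w h - K.α i (K.ρ w h) • K.cor i := by
      rw [K.rho_mul_apply, K.refl]
    rw [hrw, map_sub, map_smul, smul_eq_mul, hcor i]
    linarith
  refine ⟨part1, ?_⟩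
  have part2 : ∀ (N : ℕ) (w : W), K.cs.length w ≤ N →
      (∑ j, ω j) (K.ρ w h) ≤ (∑ j, ω j) h - (K.cs.length w : ℝ) * c := by
    intro N
    induction N with
    | zero =>
      intro w hw
      have hw1 : w = 1 := K.cs.length_eq_zero_iff.mp (Nat.le_zero.mp hw)
      subst hw1
      simp
    | succ N ih =>
      intro w hw
      by_cases h1 : w = 1
      · subst h1; simp
      · obtain ⟨j, hdj⟩ := K.cs.exists_leftDescent_of_ne_one h1
        have hlen : K.cs.length (K.cs.simple j * w) + 1 = K.cs.length w :=
          K.cs.isLeftDescent_iff.mp hdj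
        have hw'w : K.cs.simple j * (K.cs.simple j * w) = w :=
          K.cs.simple_mul_simple_cancel_left j
        have hlt : K.cs.length (K.cs.simple j * w) <
            K.cs.length (K.cs.simple j * (K.cs.simple j * w)) := by rw [hw'w]; omega
        have hstep := part1 (K.cs.simple j * w) j hlt
        rw [hw'w] at hstep
        have hih := ih (K.cs.simple j * w) (by omega)
        have hcast : (K.cs.length w : ℝ) = (K.cs.length (K.cs.simple j * w) : ℝ) + 1 := by
          rw [← hlen]; push_cast; ring
        rw [hcast]
        nlinarith [hstep, hih]
  exact fun w => part2 (K.cs.length w) w le_rfl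
end

section
/- Let $h$ be in the open fundamental chamber. Two vertices $w_1(h)$ and $w_2(h)$ of $\Xi_h = \operatorname{conv}(W\cdot h)$ are joined by an edge (a one-dimensional face) if and only if $w_2 = w_1 s_i$ for some $i \in I$. Consequently, the graph of vertices and edges of $\Xi_h$ is isomorphic to the Cayley graph of $(W,S)$. -/
open scoped Pointwise

/-- A face of a convex set: a nonempty convex extreme subset. -/
def IsFaceOf {V : Type*} [AddCommGroup V] [Module ℝ V] (P F : Set V) : Prop :=
  F.Nonempty ∧ Convex ℝ F ∧ IsExtreme ℝ P F

/-!
For `h` in the open chamber, `h - w h` is a nonnegative combination of the simple coroots in which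
every letter of a reduced word for `w` has a positive coefficient; this rests on the positivity of
`w(c_i)` for `w s_i > w`, proved by reduction to rank two. Hence the functional `∑_{t ≠ i} c_t^*`
attains its maximum over `W h` exactly at `h` and `s_i h`, so `[h, s_i h]` is an edge. Conversely,
if `w ≠ 1` and `s_i` is a left descent of `w`, then `a_i(w h) < 0 < a_i(h)`, so `[h, w h]` crosses
the mirror of `s_i` at a point that also lies inside `s_i [h, w h]`. If `[h, w h]` is a face it
must then contain `s_i h`, which makes `h - w h` a multiple of `c_i` and forces `w = s_i`. By
`W`-invariance of the polytope it suffices to treat edges starting at `h`.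
-/

open CoxeterSystem List

namespace CoxeterSystem

variable {B W : Type*} [Group W] {M : CoxeterMatrix B} (cs : CoxeterSystem M W)

local prefix:100 "π" => cs.wordProd
local prefix:100 "ℓ" => cs.length

theorem exists_eq_mul_wordProd_alternatingWord (i j : B) {w : W}
    (hw : ¬cs.IsRightDescent w i) :
    ∃ (u : W) (k : ℕ), w = u * π (alternatingWord i j k) ∧ ℓ w = ℓ u + k ∧
      ¬cs.IsRightDescent u i ∧ ¬cs.IsRightDescent u j := by
  induction hN : ℓ w using Nat.strong_induction_on generalizing w i j with
  | _ N ih =>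
  by_cases hj : cs.IsRightDescent w j
  · obtain ⟨u, k, hu, hlen, hui, huj⟩ :=
      ih _ (hN ▸ hj) j i (cs.isRightDescent_iff_not_isRightDescent_mul.mp hj) rfl
    refine ⟨u, k + 1, ?_, ?_, huj, hui⟩
    · rw [alternatingWord_succ, wordProd_concat, ← mul_assoc, ← hu,
        simple_mul_simple_cancel_right]
    · have := cs.isRightDescent_iff.mp hj
      omega
  · exact ⟨w, 0, by simp [alternatingWord], by simp [hN], hw, hj⟩

theorem eq_zero_or_lt_of_isReduced_alternatingWord {i j : B} {k : ℕ}
    (hred : cs.IsReduced (alternatingWord j i (k + 1))) : M i j = 0 ∨ k < M i j := by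
  by_contra! h
  exact cs.not_isReduced_alternatingWord j i (M.symmetric i j ▸ h.1)
    (by rw [M.symmetric]; omega) hred

variable {cs}

theorem IsReduced.of_append_left {l l' : List B} (hl : cs.IsReduced (l ++ l')) :
    cs.IsReduced l := by
  simpa using hl.take l.length

theorem IsReduced.not_isRightDescent_wordProd {l : List B} {t : B}
    (hl : cs.IsReduced (l ++ [t])) : ¬cs.IsRightDescent (cs.wordProd l) t := by
  rw [cs.not_isRightDescent_iff, ← cs.wordProd_singleton, ← cs.wordProd_append, hl,
    hl.of_append_left]
  simp

end CoxeterSystem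

namespace PointedCone

variable {E : Type*} [AddCommGroup E] [Module ℝ E] {s : Set E} {x : E}

theorem nonneg_of_mem_hull (g : E →ₗ[ℝ] ℝ) (hs : ∀ y ∈ s, 0 ≤ g y) (hx : x ∈ hull ℝ s) :
    0 ≤ g x := by
  induction hx using Submodule.span_induction with
  | mem y hy => exact hs y hy
  | zero => simp
  | add y z _ _ hy hz => rw [map_add]; exact add_nonneg hy hz
  | smul r y _ hy => rw [Nonneg.mk_smul, map_smul, smul_eq_mul]; exact mul_nonneg r.2 hy

theorem eq_zero_or_pos_of_mem_hull (g : E →ₗ[ℝ] ℝ) (hs : ∀ y ∈ s, 0 < g y)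
    (hx : x ∈ hull ℝ s) : x = 0 ∨ 0 < g x := by
  induction hx using Submodule.span_induction with
  | mem y hy => exact Or.inr (hs y hy)
  | zero => simp
  | add y z _ _ hy hz =>
    rcases hy with rfl | hy
    · simpa using hz
    rcases hz with rfl | hz
    · simpa using Or.inr hy
    exact Or.inr (by rw [map_add]; positivity)
  | smul r y _ hy =>
    rcases r with ⟨r, hr⟩
    rcases hr.eq_or_lt with rfl | hr
    · simp
    rcases hy with rfl | hy
    · simp
    exact Or.inr (by rw [Nonneg.mk_smul, map_smul, smul_eq_mul]; positivity)

end PointedCone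

namespace LinearIndependent

variable {ι K V : Type*} [Field K] [AddCommGroup V] [Module K V] {v : ι → V}

/-- Coordinates with respect to `v`, extended to the whole space through a choice of basis
containing `v`. -/
noncomputable def dualCoord (hv : LinearIndependent K v) (i : ι) : Module.Dual K V :=
  (Module.Basis.extend hv.linearIndepOn_id).coord
    ⟨v i, hv.linearIndepOn_id.subset_extend _ (Set.mem_range_self i)⟩

theorem dualCoord_apply [DecidableEq ι] (hv : LinearIndependent K v) (i j : ι) :
    hv.dualCoord i (v j) = if i = j then 1 else 0 := by
  have hb := (Module.Basis.extend hv.linearIndepOn_id).repr_self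
    ⟨v j, hv.linearIndepOn_id.subset_extend _ (Set.mem_range_self j)⟩
  simp only [Module.Basis.coe_extend] at hb
  classical
  rw [dualCoord, Module.Basis.coord_apply, hb, Finsupp.single_apply]
  simp [hv.injective.eq_iff, eq_comm]

end LinearIndependent

theorem LinearIndependent.dualCoord_nonneg_of_mem_hull {ι V : Type*} [AddCommGroup V]
    [Module ℝ V] {v : ι → V} (hv : LinearIndependent ℝ v) {x : V}
    (hx : x ∈ PointedCone.hull ℝ (Set.range v)) (i : ι) : 0 ≤ hv.dualCoord i x := by
  classical
  refine PointedCone.nonneg_of_mem_hull _ ?_ hx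
  rintro _ ⟨j, rfl⟩
  rw [hv.dualCoord_apply]
  split_ifs <;> norm_num

section Convex

variable {E F : Type*} [AddCommGroup E] [Module ℝ E] [AddCommGroup F] [Module ℝ F]

theorem IsFaceOf.image {P Q : Set E} (f : E →ₗ[ℝ] F) (hf : Function.Injective f)
    (h : IsFaceOf P Q) : IsFaceOf (f '' P) (f '' Q) := by
  obtain ⟨hne, hconv, hext⟩ := h
  refine ⟨hne.image f, hconv.linear_image f, Set.image_mono hext.subset, ?_⟩
  rintro _ ⟨x, hx, rfl⟩ _ ⟨y, hy, rfl⟩ _ ⟨z, hz, rfl⟩ hzxy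
  obtain ⟨z', hz', hzz'⟩ : f z ∈ f '' openSegment ℝ x y := by
    rw [← LinearMap.coe_toAffineMap, image_openSegment]
    exact hzxy
  exact ⟨x, hext.left_mem_of_mem_openSegment hx hy (hf hzz' ▸ hz) hz', rfl⟩

theorem exists_mem_openSegment_apply_eq_zero (g : E →ₗ[ℝ] ℝ) {x y : E} (hx : 0 < g x)
    (hy : g y < 0) : ∃ z ∈ openSegment ℝ x y, g z = 0 := by
  have hd : 0 < g x - g y := by linarith
  refine ⟨(-g y / (g x - g y)) • x + (g x / (g x - g y)) • y,
    ⟨_, _, div_pos (by linarith) hd, div_pos hx hd, by field_simp; ring, rfl⟩, ?_⟩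
  simp only [map_add, map_smul, smul_eq_mul]
  field_simp
  ring

theorem mem_convexHull_sep_of_le {S : Set E} (g : E →ₗ[ℝ] ℝ) {m : ℝ} (hS : ∀ x ∈ S, g x ≤ m)
    {x : E} (hx : x ∈ convexHull ℝ S) (hgx : g x = m) : x ∈ convexHull ℝ {y ∈ S | g y = m} := by
  set T := {y ∈ S | g y = m}
  set L := {y ∈ S | g y < m}
  have hlt : convexHull ℝ L ⊆ {y | g y < m} :=
    convexHull_min (fun y hy => hy.2) (convex_halfSpace_lt g.isLinear m)
  have hST : S = T ∪ L := by
    ext y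
    simp only [Set.mem_union, Set.mem_ofPred_eq, T, L, ← and_or_left]
    exact ⟨fun hy => ⟨hy, (hS y hy).eq_or_lt⟩, fun hy => hy.1⟩
  rcases T.eq_empty_or_nonempty with hT | hT
  · rw [hST, hT, Set.empty_union] at hx
    exact absurd hgx (hlt hx).ne
  rcases L.eq_empty_or_nonempty with hL | hL
  · rwa [hST, hL, Set.union_empty] at hx
  rw [hST, convexHull_union hT hL, mem_convexJoin] at hx
  obtain ⟨y, hy, z, hz, p, q, hp, hq, hpq, rfl⟩ := hx
  have hgy : g y = m := convexHull_min (fun y hy => hy.2) (convex_hyperplane g.isLinear m) hy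
  have hgz : g z < m := hlt hz
  have hq0 : q = 0 := by
    simp only [map_add, map_smul, smul_eq_mul, hgy] at hgx
    have : q * (m - g z) = 0 := by linear_combination m * hpq - hgx
    exact (mul_eq_zero.mp this).resolve_right (by linarith)
  simpa [hq0, show p = 1 by linarith] using hy

theorem isFaceOf_convexHull_sep_of_le {S : Set E} (g : E →ₗ[ℝ] ℝ) {m : ℝ}
    (hS : ∀ x ∈ S, g x ≤ m) (hm : ∃ x ∈ S, g x = m) :
    IsFaceOf (convexHull ℝ S) (convexHull ℝ {x ∈ S | g x = m}) := by
  have hle : ∀ x ∈ convexHull ℝ S, g x ≤ m :=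
    convexHull_min hS (convex_halfSpace_le g.isLinear m)
  have heq : ∀ x ∈ convexHull ℝ {x ∈ S | g x = m}, g x = m :=
    convexHull_min (fun x hx => hx.2) (convex_hyperplane g.isLinear m)
  obtain ⟨x₀, hx₀⟩ := hm
  refine ⟨⟨x₀, subset_convexHull ℝ _ hx₀⟩, convex_convexHull ℝ _,
    convexHull_mono (Set.sep_subset _ _), ?_⟩
  rintro x hx y hy z hz ⟨p, q, hp, hq, hpq, rfl⟩
  have hgz := heq _ hz
  simp only [map_add, map_smul, smul_eq_mul] at hgz
  have hgx : g x = m := by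
    refine le_antisymm (hle x hx) (not_lt.mp fun hlt => ?_)
    have hm : (p + q) * m = m := by rw [hpq, one_mul]
    nlinarith [mul_pos hp (sub_pos.mpr hlt), mul_nonneg hq.le (sub_nonneg.mpr (hle y hy))]
  exact mem_convexHull_sep_of_le g hS hx hgx

end Convex

namespace Representation

variable {W U : Type*} [Group W] [AddCommGroup U] [Module ℝ U] (σ : Representation ℝ W U)

theorem injective_apply (g : W) : Function.Injective (σ g) := fun x y hxy => by
  simpa using congrArg (σ g⁻¹) hxy

theorem image_convexHull_range_apply (g : W) (h : U) :
    σ g '' convexHull ℝ (Set.range fun w => σ w h) = convexHull ℝ (Set.range fun w => σ w h) := by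
  rw [LinearMap.image_convexHull, ← Set.range_comp]
  congr 1
  have : (σ g ∘ fun w => σ w h) = (fun w => σ w h) ∘ Equiv.mulLeft g := by
    ext
    simp [map_mul]
  rw [this, (Equiv.mulLeft g).surjective.range_comp]

theorem isFaceOf_segment_iff (h : U) (w₁ w₂ : W) :
    IsFaceOf (convexHull ℝ (Set.range fun w => σ w h)) (segment ℝ (σ w₁ h) (σ w₂ h)) ↔
      IsFaceOf (convexHull ℝ (Set.range fun w => σ w h)) (segment ℝ h (σ (w₁⁻¹ * w₂) h)) := by
  have himage : ∀ g a b, σ g '' segment ℝ a b = segment ℝ (σ g a) (σ g b) := fun g a b => by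
    rw [← LinearMap.coe_toAffineMap, image_segment]
  constructor
  · intro hF
    simpa [himage, σ.image_convexHull_range_apply, map_mul] using
      hF.image _ (σ.injective_apply w₁⁻¹)
  · intro hF
    simpa [himage, σ.image_convexHull_range_apply, map_mul] using
      hF.image _ (σ.injective_apply w₁)

end Representation

/-- The coefficients on `c_i` and `c_j` of `(⋯ s_i s_j)(c_i)`, for the alternating word of length
`k` ending in `s_j`, where `a = -A_ij` and `b = -A_ji`. -/
def rankTwoCoeff (a b : ℝ) : ℕ → ℝ × ℝ
  | 0 => (1, 0)
  | k + 1 =>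
      let (p, q) := rankTwoCoeff a b k
      if Even k then (p, a * p - q) else (b * q - p, q)

theorem rankTwoCoeff_nonneg_of_four_le {a b : ℝ} (ha : 1 ≤ a) (hb : 1 ≤ b) (hab : 4 ≤ a * b)
    (k : ℕ) : 0 ≤ (rankTwoCoeff a b k).1 ∧ 0 ≤ (rankTwoCoeff a b k).2 := by
  suffices H : ∀ m, 0 ≤ (rankTwoCoeff a b m).1 ∧ 0 ≤ (rankTwoCoeff a b m).2 ∧
      (if Even m then 2 * (rankTwoCoeff a b m).2 ≤ a * (rankTwoCoeff a b m).1
        else a * (rankTwoCoeff a b m).1 ≤ 2 * (rankTwoCoeff a b m).2) from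
    ⟨(H k).1, (H k).2.1⟩
  intro m
  induction m with
  | zero => simp [rankTwoCoeff]; linarith
  | succ m ih =>
    obtain ⟨hp, hq, hinv⟩ := ih
    by_cases hm : Even m
    · simp only [rankTwoCoeff, hm, if_true, Nat.even_add_one, not_true, if_false] at hinv ⊢
      exact ⟨hp, by nlinarith, by nlinarith⟩
    · simp only [rankTwoCoeff, hm, if_false, Nat.even_add_one, not_false_eq_true, if_true] at hinv ⊢
      exact ⟨by nlinarith, hq, by nlinarith⟩

theorem rankTwoCoeff_nonneg {a b : ℝ} (ha : 0 ≤ a) (hb : 0 ≤ b) {P : ℤ} (hP : a * b = P)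
    (hbig : 4 ≤ P → 1 ≤ a ∧ 1 ≤ b) {k : ℕ}
    (hk : gcmCoxeterEntry P = 0 ∨ k < gcmCoxeterEntry P) :
    0 ≤ (rankTwoCoeff a b k).1 ∧ 0 ≤ (rankTwoCoeff a b k).2 := by
  rcases lt_or_ge P 4 with hP4 | hP4
  · have hP0 : 0 ≤ P := by exact_mod_cast hP ▸ mul_nonneg ha hb
    interval_cases P <;> push_cast at hP <;> norm_num [gcmCoxeterEntry] at hk <;>
      interval_cases k <;> simp [rankTwoCoeff, Nat.even_iff] <;> and_intros <;>
      nlinarith [mul_nonneg ha hb, congrArg (a * a * ·) hP, congrArg (a * ·) hP]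
  · obtain ⟨ha1, hb1⟩ := hbig hP4
    exact rankTwoCoeff_nonneg_of_four_le ha1 hb1 (by rw [hP]; exact_mod_cast hP4) k

/-- The part of `KMWeyl` that the geometry of the orbit uses. Unlike `KMWeyl` it is stable under
passing to the contragredient representation, which turns coroot positivity into root
positivity. -/
structure IsGCMRepresentation {B W U : Type*} [Group W] [AddCommGroup U] [Module ℝ U]
    {M : CoxeterMatrix B} (cs : CoxeterSystem M W) (A : Matrix B B ℤ)
    (σ : Representation ℝ W U) (a : B → Module.Dual ℝ U) (c : B → U) : Prop where
  apply_coroot : ∀ i j, a j (c i) = A i j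
  diag : ∀ i, A i i = 2
  nonpos : ∀ i j, i ≠ j → A i j ≤ 0
  coxeterMatrix : ∀ i j, i ≠ j → M i j = gcmCoxeterEntry (A i j * A j i)
  simple_apply : ∀ i v, σ (cs.simple i) v = v - a i v • c i

namespace IsGCMRepresentation

open PointedCone

variable {B W U : Type*} [Group W] [AddCommGroup U] [Module ℝ U] {M : CoxeterMatrix B}
  {cs : CoxeterSystem M W} {A : Matrix B B ℤ} {σ : Representation ℝ W U}
  {a : B → Module.Dual ℝ U} {c : B → U}

theorem apply_simple_apply (R : IsGCMRepresentation cs A σ a c) (i : B) (v : U) :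
    a i (σ (cs.simple i) v) = -a i v := by
  rw [R.simple_apply, map_sub, map_smul, R.apply_coroot, R.diag]
  simp only [smul_eq_mul]
  push_cast
  ring

theorem wordProd_alternatingWord_apply (R : IsGCMRepresentation cs A σ a c) (i j : B) (k : ℕ) :
    σ (cs.wordProd (alternatingWord i j k)) (c i) =
      (rankTwoCoeff (-A i j) (-A j i) k).1 • c i + (rankTwoCoeff (-A i j) (-A j i) k).2 • c j := by
  induction k with
  | zero => simp [alternatingWord, rankTwoCoeff]
  | succ k ih =>
    rw [alternatingWord_succ', cs.wordProd_cons, map_mul, Module.End.mul_apply, ih]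
    by_cases hk : Even k <;>
      simp only [hk, ↓reduceIte, rankTwoCoeff, R.simple_apply, map_add, map_smul,
        R.apply_coroot, R.diag, smul_eq_mul] <;>
      push_cast <;> module

theorem exists_nonneg_wordProd_alternatingWord_apply (R : IsGCMRepresentation cs A σ a c) {i j : B}
    (hij : i ≠ j) {k : ℕ} (hk : M i j = 0 ∨ k < M i j) :
    ∃ p q : ℝ, 0 ≤ p ∧ 0 ≤ q ∧
      σ (cs.wordProd (alternatingWord i j k)) (c i) = p • c i + q • c j := by
  have hA : ∀ {i j}, i ≠ j → (0 : ℝ) ≤ -A i j := fun h => by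
    simpa using (Int.cast_nonpos (R := ℝ)).mpr (R.nonpos _ _ h)
  have hbig : 4 ≤ A i j * A j i → 1 ≤ -(A i j : ℝ) ∧ 1 ≤ -(A j i : ℝ) := by
    intro h4
    have := R.nonpos i j hij
    have := R.nonpos j i hij.symm
    constructor <;> [exact_mod_cast (by nlinarith : (1 : ℤ) ≤ -A i j);
      exact_mod_cast (by nlinarith : (1 : ℤ) ≤ -A j i)]
  obtain ⟨hp, hq⟩ := rankTwoCoeff_nonneg (hA hij) (hA hij.symm) (by push_cast; ring) hbig
    (R.coxeterMatrix i j hij ▸ hk)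
  exact ⟨_, _, hp, hq, R.wordProd_alternatingWord_apply i j k⟩

/-- Write `w = u v` with `v` in the rank-two subgroup generated by `s_i` and a right descent `s_j`
of `w`, and `u` having neither as a right descent. Then `v(c_i)` is a nonnegative combination of
`c_i` and `c_j`, to which induction on the length applies. -/
theorem apply_coroot_mem_hull (R : IsGCMRepresentation cs A σ a c) {w : W} {i : B}
    (hw : ¬cs.IsRightDescent w i) : σ w (c i) ∈ hull ℝ (Set.range c) := by
  induction hN : cs.length w using Nat.strong_induction_on generalizing w i with
  | _ N ih =>
  rcases eq_or_ne w 1 with rfl | hw1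
  · simpa using subset_hull (Set.mem_range_self i)
  obtain ⟨j, hj⟩ := cs.exists_rightDescent_of_ne_one hw1
  have hij : i ≠ j := by rintro rfl; exact hw hj
  obtain ⟨u, k, rfl, hlen, hui, huj⟩ := cs.exists_eq_mul_wordProd_alternatingWord i j hw
  have hk : k ≠ 0 := by rintro rfl; simp [alternatingWord] at hj; exact huj hj
  have hred : cs.IsReduced (alternatingWord j i (k + 1)) := by
    have h₁ := cs.not_isRightDescent_iff.mp hw
    have h₂ := cs.length_mul_le u (cs.wordProd (alternatingWord i j k) * cs.simple i)
    have h₃ := cs.length_wordProd_le (alternatingWord j i (k + 1))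
    unfold CoxeterSystem.IsReduced
    rw [alternatingWord_succ, wordProd_concat, length_concat, length_alternatingWord] at h₃ ⊢
    rw [← mul_assoc] at h₂
    omega
  obtain ⟨p, q, hp, hq, hpq⟩ := R.exists_nonneg_wordProd_alternatingWord_apply hij
    (cs.eq_zero_or_lt_of_isReduced_alternatingWord hred)
  rw [map_mul, Module.End.mul_apply, hpq, map_add, map_smul, map_smul]
  exact add_mem (smul_mem _ hp (ih _ (by omega) hui rfl))
    (smul_mem _ hq (ih _ (by omega) huj rfl))

theorem dual (R : IsGCMRepresentation cs A σ a c) :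
    IsGCMRepresentation cs A.transpose σ.dual (fun i => Module.Dual.eval ℝ U (c i)) a where
  apply_coroot i j := by simp [R.apply_coroot]
  diag i := by simp [R.diag]
  nonpos i j h := R.nonpos j i h.symm
  coxeterMatrix i j h := by
    rw [Matrix.transpose_apply, Matrix.transpose_apply, mul_comm]
    exact R.coxeterMatrix i j h
  simple_apply i φ := by
    ext v
    simp [Module.Dual.transpose_apply, R.simple_apply, mul_comm]

theorem coroot_ne_zero (R : IsGCMRepresentation cs A σ a c) (i : B) : c i ≠ 0 := by
  intro h
  simpa [h, R.diag] using R.apply_coroot i i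

theorem apply_pos_of_not_isLeftDescent (R : IsGCMRepresentation cs A σ a c) {h : U}
    (hh : ∀ i, 0 < a i h) {w : W} {i : B} (hw : ¬cs.IsLeftDescent w i) : 0 < a i (σ w h) := by
  have hmem := R.dual.apply_coroot_mem_hull (w := w⁻¹) (i := i)
    (by rwa [cs.isRightDescent_inv_iff])
  rcases eq_zero_or_pos_of_mem_hull (Module.Dual.eval ℝ U h) (by rintro _ ⟨t, rfl⟩; exact hh t)
    hmem with h0 | hpos
  · have := LinearMap.congr_fun h0 (σ w⁻¹ (c i))
    simp [Module.Dual.transpose_apply, R.apply_coroot, R.diag] at this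
  · simpa [Module.Dual.transpose_apply] using hpos

theorem apply_neg_of_isLeftDescent (R : IsGCMRepresentation cs A σ a c) {h : U}
    (hh : ∀ i, 0 < a i h) {w : W} {i : B} (hw : cs.IsLeftDescent w i) : a i (σ w h) < 0 := by
  have hpos := R.apply_pos_of_not_isLeftDescent hh
    (cs.isLeftDescent_iff_not_isLeftDescent_mul.mp hw)
  rwa [map_mul, Module.End.mul_apply, R.apply_simple_apply, neg_pos] at hpos

theorem sub_wordProd_append_apply (R : IsGCMRepresentation cs A σ a c) (h : U) (l : List B)
    (t : B) :
    h - σ (cs.wordProd (l ++ [t])) h =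
      (h - σ (cs.wordProd l) h) + a t h • σ (cs.wordProd l) (c t) := by
  rw [cs.wordProd_append, cs.wordProd_singleton, map_mul, Module.End.mul_apply, R.simple_apply,
    map_sub, map_smul]
  abel

theorem sub_apply_mem_hull (R : IsGCMRepresentation cs A σ a c) {h : U} (hh : ∀ i, 0 ≤ a i h)
    (w : W) : h - σ w h ∈ hull ℝ (Set.range c) := by
  obtain ⟨l, hl, rfl⟩ := cs.exists_isReduced w
  induction l using List.reverseRecOn with
  | nil => simp
  | append_singleton l t ih =>
    rw [R.sub_wordProd_append_apply]
    exact add_mem (ih hl.of_append_left)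
      (smul_mem _ (hh t) (R.apply_coroot_mem_hull hl.not_isRightDescent_wordProd))

theorem dualCoord_wordProd_apply_of_notMem (R : IsGCMRepresentation cs A σ a c)
    (hc : LinearIndependent ℝ c) {k : B} {l : List B} (hk : k ∉ l) (x : U) :
    hc.dualCoord k (σ (cs.wordProd l) x) = hc.dualCoord k x := by
  classical
  induction l with
  | nil => simp
  | cons t l ih =>
    rw [List.mem_cons, not_or] at hk
    rw [cs.wordProd_cons, map_mul, Module.End.mul_apply, R.simple_apply, map_sub, map_smul,
      hc.dualCoord_apply, if_neg hk.1, smul_zero, sub_zero, ih hk.2]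

theorem dualCoord_sub_apply_pos (R : IsGCMRepresentation cs A σ a c)
    (hc : LinearIndependent ℝ c) {h : U} (hh : ∀ i, 0 < a i h) {l : List B}
    (hl : cs.IsReduced l) {k : B} (hk : k ∈ l) :
    0 < hc.dualCoord k (h - σ (cs.wordProd l) h) := by
  classical
  induction l using List.reverseRecOn with
  | nil => simp at hk
  | append_singleton l t ih =>
    have hprefix := hc.dualCoord_nonneg_of_mem_hull
      (R.sub_apply_mem_hull (fun i => (hh i).le) (cs.wordProd l)) k
    have hlast := hc.dualCoord_nonneg_of_mem_hull
      (R.apply_coroot_mem_hull hl.not_isRightDescent_wordProd) k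
    rw [R.sub_wordProd_append_apply, map_add, map_smul, smul_eq_mul]
    by_cases hkl : k ∈ l
    · nlinarith [ih hl.of_append_left hkl, hh t]
    · obtain rfl : k = t := by simpa [hkl] using hk
      rw [R.dualCoord_wordProd_apply_of_notMem hc hkl, hc.dualCoord_apply, if_pos rfl, mul_one]
      linarith [hh k]

theorem eq_one_or_eq_simple_of_dualCoord_sub_apply_eq_zero (R : IsGCMRepresentation cs A σ a c)
    (hc : LinearIndependent ℝ c) {h : U} (hh : ∀ i, 0 < a i h) {v : W} {i : B}
    (hv : ∀ t, t ≠ i → hc.dualCoord t (h - σ v h) = 0) : v = 1 ∨ v = cs.simple i := by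
  obtain ⟨l, hl, rfl⟩ := cs.exists_isReduced v
  have hall : ∀ t ∈ l, t = i := fun t ht => by
    by_contra hti
    exact (R.dualCoord_sub_apply_pos hc hh hl ht).ne' (hv t hti)
  match l, hl, hall with
  | [], _, _ => simp
  | [t], _, hall => simp [hall t (by simp)]
  | t :: t' :: r, hl, hall =>
    have hπ : cs.wordProd (t :: t' :: r) = cs.wordProd r := by
      rw [cs.wordProd_cons, cs.wordProd_cons, hall t (by simp), hall t' (by simp),
        cs.simple_mul_simple_cancel_left]
    have := cs.length_wordProd_le r
    unfold CoxeterSystem.IsReduced at hl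
    rw [hπ, List.length_cons, List.length_cons] at hl
    omega

theorem isFaceOf_segment_simple [Fintype B] (R : IsGCMRepresentation cs A σ a c)
    (hc : LinearIndependent ℝ c) {h : U} (hh : ∀ i, 0 < a i h) (i : B) :
    IsFaceOf (convexHull ℝ (Set.range fun w => σ w h)) (segment ℝ h (σ (cs.simple i) h)) := by
  classical
  set g : Module.Dual ℝ U := ∑ t ∈ Finset.univ.erase i, hc.dualCoord t
  have hsub : ∀ v t, 0 ≤ hc.dualCoord t (h - σ v h) := fun v =>
    hc.dualCoord_nonneg_of_mem_hull (R.sub_apply_mem_hull (fun t => (hh t).le) v)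
  have hg : ∀ v, g h - g (σ v h) = ∑ t ∈ Finset.univ.erase i, hc.dualCoord t (h - σ v h) := by
    intro v
    simp [g, Finset.sum_sub_distrib]
  have hle : ∀ v, g (σ v h) ≤ g h := fun v =>
    sub_nonneg.mp ((hg v).symm ▸ Finset.sum_nonneg fun t _ => hsub v t)
  have hmax : {x ∈ Set.range fun w => σ w h | g x = g h} = {h, σ (cs.simple i) h} := by
    ext x
    constructor
    · rintro ⟨⟨v, rfl⟩, hv⟩
      have hzero := (Finset.sum_eq_zero_iff_of_nonneg fun t _ => hsub v t).mp
        (by rw [← hg, hv, sub_self])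
      rcases R.eq_one_or_eq_simple_of_dualCoord_sub_apply_eq_zero hc hh
        (fun t ht => hzero t (Finset.mem_erase.mpr ⟨ht, Finset.mem_univ t⟩)) with rfl | rfl
      all_goals simp
    · rintro (rfl | rfl)
      · exact ⟨⟨1, by simp⟩, rfl⟩
      refine ⟨⟨cs.simple i, rfl⟩, ?_⟩
      refine (sub_eq_zero.mp ((hg _).trans (Finset.sum_eq_zero fun t ht => ?_))).symm
      rw [map_sub, ← cs.wordProd_singleton, R.dualCoord_wordProd_apply_of_notMem hc
        (by simpa using Finset.ne_of_mem_erase ht), sub_self]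
  have hface := isFaceOf_convexHull_sep_of_le (S := Set.range fun w => σ w h) g (m := g h)
    (by rintro _ ⟨v, rfl⟩; exact hle v)
    ⟨h, ⟨1, by simp⟩, rfl⟩
  rwa [hmax, convexHull_pair] at hface

theorem exists_eq_simple_of_isFaceOf_segment (R : IsGCMRepresentation cs A σ a c)
    (hc : LinearIndependent ℝ c) {h : U} (hh : ∀ i, 0 < a i h) {w : W} (hw : w ≠ 1)
    (hF : IsFaceOf (convexHull ℝ (Set.range fun w => σ w h)) (segment ℝ h (σ w h))) :
    ∃ i, w = cs.simple i := by
  classical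
  obtain ⟨i, hi⟩ := cs.exists_leftDescent_of_ne_one hw
  obtain ⟨z, hz, hz0⟩ :=
    exists_mem_openSegment_apply_eq_zero (a i) (hh i) (R.apply_neg_of_isLeftDescent hh hi)
  have hz' : z ∈ openSegment ℝ (σ (cs.simple i) h) (σ (cs.simple i * w) h) := by
    rw [map_mul, Module.End.mul_apply, ← LinearMap.coe_toAffineMap, ← image_openSegment]
    exact ⟨z, hz, by simp [R.simple_apply, hz0]⟩
  have horbit : ∀ v, σ v h ∈ convexHull ℝ (Set.range fun w => σ w h) := fun v =>
    subset_convexHull ℝ _ ⟨v, rfl⟩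
  obtain ⟨p, q, -, -, hpq, hsi⟩ := hF.2.2.left_mem_of_mem_openSegment (horbit _) (horbit _)
    (openSegment_subset_segment _ _ _ hz) hz'
  have hsub : q • (h - σ w h) = a i h • c i := by
    rw [R.simple_apply] at hsi
    linear_combination (norm := module) hpq • h - hsi
  have hq : q ≠ 0 := by
    rintro rfl
    rw [zero_smul, eq_comm, smul_eq_zero] at hsub
    exact hsub.elim (hh i).ne' (R.coroot_ne_zero i)
  have hv : ∀ t, t ≠ i → hc.dualCoord t (h - σ w h) = 0 := by
    intro t ht
    have := congrArg (hc.dualCoord t) hsub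
    rw [map_smul, map_smul, hc.dualCoord_apply, if_neg ht, smul_zero, smul_eq_mul] at this
    exact (mul_eq_zero.mp this).resolve_left hq
  exact ⟨i, (R.eq_one_or_eq_simple_of_dualCoord_sub_apply_eq_zero hc hh hv).resolve_left hw⟩

end IsGCMRepresentation

theorem KMWeyl.isGCMRepresentation {n : ℕ} {V : Type*} [AddCommGroup V] [Module ℝ V]
    {W : Type*} [Group W] {M : CoxeterMatrix (Fin n)} (K : KMWeyl n V W M) :
    IsGCMRepresentation K.cs K.A K.ρ K.α K.cor :=
  ⟨K.pairing, K.diag, K.offDiag, K.coxMat, K.refl⟩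

/-- Two distinct vertices `w₁(h)` and `w₂(h)` of `Ξ_h` are joined by an edge precisely when
`w₂ = w₁ s_i` for some `i`; hence the graph of `Ξ_h` is the Cayley graph of `(W,S)`. -/
theorem stmt_10 {n : ℕ} {V : Type*} [AddCommGroup V] [Module ℝ V]
    {W : Type*} [Group W] {M : CoxeterMatrix (Fin n)} (K : KMWeyl n V W M)
    (h : V) (hC : ∀ i, 0 < K.α i h)
    (w₁ w₂ : W) (hne : w₁ ≠ w₂) :
    IsFaceOf (convexHull ℝ (K.orb h)) (segment ℝ (K.ρ w₁ h) (K.ρ w₂ h)) ↔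
      ∃ i : Fin n, w₂ = w₁ * K.cs.simple i := by
  have R := K.isGCMRepresentation
  rw [KMWeyl.orb, Representation.isFaceOf_segment_iff]
  constructor
  · intro hF
    obtain ⟨i, hi⟩ := R.exists_eq_simple_of_isFaceOf_segment K.cofree hC
      (by rwa [Ne, inv_mul_eq_one]) hF
    exact ⟨i, by rw [← hi, mul_inv_cancel_left]⟩
  · rintro ⟨i, rfl⟩
    simpa using R.isFaceOf_segment_simple K.cofree hC i
end

section
/- Kostant convexity for $\mathrm{SL}_2$, image description: with $a = \operatorname{diag}(e^r, e^{-r})$, $r > 0$, and $\Pi : \mathrm{SL}_2(\mathbb{R}) \to A$ the Iwasawa projection, the set $\{\Pi(a k) : k \in \mathrm{SO}(2)\}$ equals $\{\operatorname{diag}(e^s, e^{-s}) : s \in [-r, r]\}$, i.e. the exponential of the segment joining $\operatorname{diag}(r,-r)$ and $\operatorname{diag}(-r,r)$ in the Cartan subalgebra. -/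
/-!
The first column of `k' · diag(d, d⁻¹) · u`, with `u` upper unitriangular, is `d` times the
unit first column of `k'`; so the `A`-part of `g ∈ SL₂(ℝ)` is the length of the first column of
`g`, and conversely every `g` of determinant one decomposes with that `d`. For `g = a k` with
`k` the rotation by `γ` this length squared is `e^{2r} cos² γ + e^{-2r} sin² γ`, a convex
combination of `e^{2r}` and `e^{-2r}`, and every convex combination of the two occurs.
-/

open Real

/-- A matrix is a rotation, i.e. lies in `SO(2)`. -/
def IsSO2 (k : Matrix (Fin 2) (Fin 2) ℝ) : Prop :=
  k.transpose * k = 1 ∧ k.det = 1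

/-- A matrix is upper unitriangular. -/
def IsUniUpper (u : Matrix (Fin 2) (Fin 2) ℝ) : Prop :=
  u 0 0 = 1 ∧ u 1 1 = 1 ∧ u 1 0 = 0

open Matrix

def rotMatrix (c s : ℝ) : Matrix (Fin 2) (Fin 2) ℝ := !![c, -s; s, c]

theorem isSO2_rotMatrix {c s : ℝ} (h : c ^ 2 + s ^ 2 = 1) : IsSO2 (rotMatrix c s) := by
  constructor
  · ext i j; fin_cases i <;> fin_cases j <;>
      simp [rotMatrix, Matrix.mul_apply, Fin.sum_univ_two, ← sq, h, mul_comm, add_comm]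
  · rw [rotMatrix, det_fin_two_of]; linear_combination h

theorem IsSO2.sq_add_sq_col_zero {k : Matrix (Fin 2) (Fin 2) ℝ} (hk : IsSO2 k) :
    k 0 0 ^ 2 + k 1 0 ^ 2 = 1 := by
  have := congrFun (congrFun hk.1 0) 0
  simpa [Matrix.mul_apply, Fin.sum_univ_two, sq] using this

theorem mul_diag_mul_col_zero {k u : Matrix (Fin 2) (Fin 2) ℝ} (hu : IsUniUpper u) (d e : ℝ)
    (i : Fin 2) : (k * !![d, 0; 0, e] * u) i 0 = k i 0 * d := by
  simp [Matrix.mul_apply, Fin.sum_univ_two, hu.1, hu.2.2]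

theorem exists_iwasawa_iff {g : Matrix (Fin 2) (Fin 2) ℝ} (hg : g.det = 1) {d : ℝ} (hd : 0 < d) :
    (∃ k', IsSO2 k' ∧ ∃ u, IsUniUpper u ∧ g = k' * !![d, 0; 0, d⁻¹] * u) ↔
      d ^ 2 = g 0 0 ^ 2 + g 1 0 ^ 2 := by
  constructor
  · rintro ⟨k', hk', u, hu, rfl⟩
    simp only [mul_diag_mul_col_zero hu]
    linear_combination (-d ^ 2) * hk'.sq_add_sq_col_zero
  · intro hd2
    -- Gram–Schmidt: the entry of `u` is `⟪g₀, g₁⟫ / ‖g₀‖²` for the columns `g₀, g₁` of `g`.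
    refine ⟨rotMatrix (g 0 0 / d) (g 1 0 / d), isSO2_rotMatrix ?_,
      !![1, (g 0 0 * g 0 1 + g 1 0 * g 1 1) / d ^ 2; 0, 1], ⟨rfl, rfl, rfl⟩, ?_⟩
    · field_simp; linear_combination -hd2
    · rw [det_fin_two] at hg
      rw [rotMatrix, mul_fin_two, mul_fin_two]
      ext i j; fin_cases i <;> fin_cases j <;>
        simp only [of_apply, cons_val', cons_val_zero, cons_val_one, empty_val',
          cons_val_fin_one, Fin.zero_eta, Fin.mk_one] <;> field_simp
      · ring
      · linear_combination d * g 0 1 * hd2 - d * g 1 0 * hg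
      · ring
      · linear_combination d * g 1 1 * hd2 + d * g 0 0 * hg

theorem exists_mem_Icc_exp_eq_iff {r d : ℝ} :
    (∃ s ∈ Set.Icc (-r) r, d = exp s) ↔ exp (-r) ≤ d ∧ d ≤ exp r := by
  constructor
  · rintro ⟨s, ⟨hrs, hsr⟩, rfl⟩
    exact ⟨exp_le_exp.mpr hrs, exp_le_exp.mpr hsr⟩
  · rintro ⟨hrd, hdr⟩
    have hd : 0 < d := (exp_pos _).trans_le hrd
    exact ⟨log d, ⟨(le_log_iff_exp_le hd).mpr hrd, (log_le_iff_le_exp hd).mpr hdr⟩,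
      (exp_log hd).symm⟩

theorem exists_isSO2_diag_mul_iff {α β D : ℝ} (hβα : β ^ 2 ≤ α ^ 2) :
    (∃ k, IsSO2 k ∧ D = (α * k 0 0) ^ 2 + (β * k 1 0) ^ 2) ↔ β ^ 2 ≤ D ∧ D ≤ α ^ 2 := by
  constructor
  · rintro ⟨k, hk, rfl⟩
    have hcol := hk.sq_add_sq_col_zero
    constructor <;> nlinarith [mul_le_mul_of_nonneg_right hβα (sq_nonneg (k 0 0)),
      mul_le_mul_of_nonneg_right hβα (sq_nonneg (k 1 0))]
  · intro hD
    rw [← Set.mem_Icc, ← segment_eq_Icc hβα] at hD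
    obtain ⟨a, b, ha, hb, hab, rfl⟩ := hD
    refine ⟨rotMatrix (√b) (√a), isSO2_rotMatrix ?_, ?_⟩ <;>
      simp only [rotMatrix, of_apply, cons_val', cons_val_zero, cons_val_one, empty_val',
        cons_val_fin_one, mul_pow, sq_sqrt ha, sq_sqrt hb, smul_eq_mul]
    · linarith
    · ring

theorem exists_iwasawa_diag_mul_iff {α β d : ℝ} (hαβ : α * β = 1) (hd : 0 < d) :
    (∃ k k' u, IsSO2 k ∧ IsSO2 k' ∧ IsUniUpper u ∧
        !![α, 0; 0, β] * k = k' * !![d, 0; 0, d⁻¹] * u) ↔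
      ∃ k, IsSO2 k ∧ d ^ 2 = (α * k 0 0) ^ 2 + (β * k 1 0) ^ 2 := by
  refine exists_congr fun k => ?_
  simp only [exists_and_left]
  refine and_congr_right fun hk => ?_
  have hdet : (!![α, 0; 0, β] * k).det = 1 := by
    rw [det_mul, det_fin_two_of, hk.2]; linear_combination hαβ
  rw [exists_iwasawa_iff hdet hd]
  simp [Matrix.mul_apply, Fin.sum_univ_two]

/-- Kostant convexity for `SL₂(ℝ)`, image description: the set of Iwasawa `A`-components of
`a k`, for `a = diag(eʳ, e⁻ʳ)` with `r > 0` and `k` ranging over `SO(2)`, is exactly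
`{diag(eˢ, e⁻ˢ) : s ∈ [-r, r]}`. -/
theorem stmt_16 (r : ℝ) (hr : 0 < r) :
    {d : ℝ | 0 < d ∧ ∃ k k' u : Matrix (Fin 2) (Fin 2) ℝ, IsSO2 k ∧ IsSO2 k' ∧ IsUniUpper u ∧
        !![exp r, 0; 0, exp (-r)] * k = k' * !![d, 0; 0, d⁻¹] * u} =
      {d : ℝ | ∃ s ∈ Set.Icc (-r) r, d = exp s} := by
  have hexp : exp (-r) ^ 2 ≤ exp r ^ 2 :=
    pow_le_pow_left₀ (exp_pos _).le (exp_le_exp.mpr (by linarith)) 2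
  have hdet : exp r * exp (-r) = 1 := by rw [← exp_add, add_neg_cancel, exp_zero]
  ext d
  simp only [Set.mem_ofPred_eq, exists_mem_Icc_exp_eq_iff]
  constructor
  · rintro ⟨hd, hk⟩
    rw [exists_iwasawa_diag_mul_iff hdet hd, exists_isSO2_diag_mul_iff hexp,
      sq_le_sq₀ (exp_pos _).le hd.le, sq_le_sq₀ hd.le (exp_pos _).le] at hk
    exact hk
  · rintro ⟨hrd, hdr⟩
    have hd : 0 < d := (exp_pos _).trans_le hrd
    rw [exists_iwasawa_diag_mul_iff hdet hd, exists_isSO2_diag_mul_iff hexp,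
      sq_le_sq₀ (exp_pos _).le hd.le, sq_le_sq₀ hd.le (exp_pos _).le]
    exact ⟨hd, hrd, hdr⟩
end
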